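/- arXiv:1806.06512 — 11 statements merged into one kernel-verified Lean document; each statement's English description precedes it below -/
import Mathlib

section
/- Let τ ≥ 0. If T_n ≥ τ for all n, T_n → T in ℝ, and u_n converges weakly in H to u, then y^τ(T_n; y₀, u_n) converges weakly in H to y^τ(T; y₀, u). -/
open RealInnerProductSpace Filter

theorem stmt_1
    {H : Type*} [NormedAddCommGroup H] [InnerProductSpace ℝ H] [CompleteSpace H]
    (lam : ℝ) (hlam : 0 < lam)
    (S : ℝ → H →L[ℝ] H)
    (hS0 : S 0 = ContinuousLinearMap.id ℝ H)
    (hSadd : ∀ s t : ℝ, 0 ≤ s → 0 ≤ t → S (s + t) = (S s).comp (S t))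
    (hSsa : ∀ t : ℝ, 0 ≤ t → ∀ x z : H, ⟪S t x, z⟫ = ⟪x, S t z⟫)
    (hScont : ∀ y : H, ContinuousOn (fun t => S t y) (Set.Ici (0 : ℝ)))
    (hSdecay : ∀ t : ℝ, 0 ≤ t → ∀ y : H, ‖S t y‖ ≤ Real.exp (-(lam * t)) * ‖y‖)
    (P : H →L[ℝ] H)
    (hPsa : ∀ x z : H, ⟪P x, z⟫ = ⟪x, P z⟫)
    (hPnorm : ∀ u : H, ‖P u‖ ≤ ‖u‖)
    (y₀ : H) (r : ℝ) (hr : 0 < r)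
    (τ : ℝ) (hτ : 0 ≤ τ)
    (T : ℕ → ℝ) (hT : ∀ n, τ ≤ T n) (Tlim : ℝ)
    (hTlim : Tendsto T atTop (nhds Tlim))
    (u : ℕ → H) (ulim : H)
    (hu : ∀ v : H, Tendsto (fun n => ⟪u n, v⟫) atTop (nhds ⟪ulim, v⟫)) :
    ∀ v : H, Tendsto (fun n => ⟪S (T n) y₀ + S (T n - τ) (P (u n)), v⟫) atTop
      (nhds ⟪S Tlim y₀ + S (Tlim - τ) (P ulim), v⟫) := by
  intro v
  have hτT : τ ≤ Tlim := ge_of_tendsto' hTlim hT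
  have hTn0 : ∀ n, (0:ℝ) ≤ T n := fun n => hτ.trans (hT n)
  have hTlim0 : (0:ℝ) ≤ Tlim := hτ.trans hτT
  -- boundedness of u n via Banach-Steinhaus
  obtain ⟨M, hM⟩ : ∃ M, ∀ n, ‖innerSL ℝ (u n)‖ ≤ M := by
    apply banach_steinhaus
    intro x
    have hb : BddAbove (Set.range fun n => ‖⟪u n, x⟫‖) :=
      ((hu x).norm).bddAbove_range
    obtain ⟨C, hC⟩ := hb
    exact ⟨C, fun n => hC ⟨n, rfl⟩⟩
  have hM' : ∀ n, ‖u n‖ ≤ M := fun n => by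
    simpa [innerSL_apply_norm] using hM n
  -- strong convergence of t ↦ S t y at relevant points
  have key : ∀ (y : H) (t : ℕ → ℝ) (tl : ℝ), (∀ n, 0 ≤ t n) → (0 ≤ tl) →
      Tendsto t atTop (nhds tl) →
      Tendsto (fun n => S (t n) y) atTop (nhds (S tl y)) := by
    intro y t tl ht htl htend
    have : Tendsto t atTop (nhdsWithin tl (Set.Ici 0)) :=
      tendsto_nhdsWithin_of_tendsto_nhds_of_eventually_within _ htend
        (Eventually.of_forall ht)
    exact ((hScont y tl htl).tendsto).comp this
  -- first term
  have h1 : Tendsto (fun n => ⟪S (T n) y₀, v⟫) atTop (nhds ⟪S Tlim y₀, v⟫) := by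
    have := key y₀ T Tlim hTn0 hTlim0 hTlim
    exact (Continuous.tendsto (continuous_inner.comp (Continuous.prodMk continuous_id continuous_const)) _).comp this |>.congr (fun n => rfl)
  -- second term
  have hsub : Tendsto (fun n => T n - τ) atTop (nhds (Tlim - τ)) :=
    hTlim.sub tendsto_const_nhds
  have hw : Tendsto (fun n => P (S (T n - τ) v)) atTop (nhds (P (S (Tlim - τ) v))) :=
    P.continuous.continuousAt.tendsto.comp
      (key v (fun n => T n - τ) (Tlim - τ) (fun n => sub_nonneg.2 (hT n))
        (sub_nonneg.2 hτT) hsub)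
  have h2 : Tendsto (fun n => ⟪S (T n - τ) (P (u n)), v⟫) atTop
      (nhds ⟪S (Tlim - τ) (P ulim), v⟫) := by
    have heq : ∀ n, ⟪S (T n - τ) (P (u n)), v⟫ = ⟪u n, P (S (T n - τ) v)⟫ := by
      intro n
      rw [hSsa _ (sub_nonneg.2 (hT n)), ← hPsa]
    have heql : ⟪S (Tlim - τ) (P ulim), v⟫ = ⟪ulim, P (S (Tlim - τ) v)⟫ := by
      rw [hSsa _ (sub_nonneg.2 hτT), ← hPsa]
    rw [heql]
    simp only [heq]
    set w := P (S (Tlim - τ) v)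
    have hsplit : ∀ n, ⟪u n, P (S (T n - τ) v)⟫
        = ⟪u n, P (S (T n - τ) v) - w⟫ + ⟪u n, w⟫ := by
      intro n; rw [inner_sub_right]; ring
    have hA : Tendsto (fun n => ⟪u n, P (S (T n - τ) v) - w⟫) atTop (nhds 0) := by
      have hnorm : Tendsto (fun n => ‖P (S (T n - τ) v) - w‖) atTop (nhds 0) := by
        have := hw.sub (tendsto_const_nhds (x := w))
        simpa using this.norm
      have hb : ∀ n, |⟪u n, P (S (T n - τ) v) - w⟫| ≤ M * ‖P (S (T n - τ) v) - w‖ := by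
        intro n
        calc |⟪u n, P (S (T n - τ) v) - w⟫| ≤ ‖u n‖ * ‖P (S (T n - τ) v) - w‖ :=
              abs_real_inner_le_norm _ _
          _ ≤ M * ‖P (S (T n - τ) v) - w‖ :=
              mul_le_mul_of_nonneg_right (hM' n) (norm_nonneg _)
      have hM0 : Tendsto (fun n => M * ‖P (S (T n - τ) v) - w‖) atTop (nhds 0) := by
        simpa using hnorm.const_mul M
      exact squeeze_zero_norm (fun n => by simpa using hb n) hM0
    have := hA.add (hu w)
    simpa [hsplit] using this
  have := h1.add h2
  simpa [inner_add_left] using this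
end

section
/- (Lemma 2.1: existence of an optimal control) For every M > 0 and every τ ≥ 0, the infimum defining t*(M,τ) is attained: t*(M,τ) is a finite real number with t*(M,τ) ≥ τ, and there exists u* ∈ U_M such that ‖y^τ(t*(M,τ); y₀, u*)‖ ≤ r. -/
/-!
The set of times at which the target ball is reachable is nonempty (with the zero control,
`‖S T y₀‖ ≤ e^{-λ₁T}‖y₀‖ < r` for large `T`) and bounded below by `τ`, so it suffices to show that
it is closed. Along times `Tₙ → t` with admissible controls `uₙ`, Banach–Alaoglu (via the Riesz
isomorphism) gives a weak cluster point `u*` of `(uₙ)` in the ball of radius `M`. Self-adjointness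
moves the semigroup and `P` onto the test vector, `⟪S (Tₙ - τ) (P uₙ), w⟫ = ⟪uₙ, P (S (Tₙ - τ) w)⟫`,
where the right-hand factor converges strongly; hence the states converge weakly to the state
reached by `u*` at time `t`, and the weak lower semicontinuity of the norm keeps it in the ball.
-/

open RealInnerProductSpace Filter
open Topology Metric Set

section WeakCompactness

variable {H : Type*} [NormedAddCommGroup H] [InnerProductSpace ℝ H]

theorem exists_ultrafilter_tendsto_inner_of_norm_le [CompleteSpace H] {ι : Type*}
    {l : Filter ι} [l.NeBot] {u : ι → H} {M : ℝ} (hu : ∀ i, ‖u i‖ ≤ M) :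
    ∃ (U : Ultrafilter ι) (v : H), ↑U ≤ l ∧ ‖v‖ ≤ M ∧
      ∀ w, Tendsto (fun i => ⟪u i, w⟫) U (𝓝 ⟪v, w⟫) := by
  let φ : ι → WeakDual ℝ H := fun i => StrongDual.toWeakDual (InnerProductSpace.toDual ℝ H (u i))
  have hφ : ∀ i, φ i ∈ WeakDual.toStrongDual ⁻¹' closedBall 0 M := fun i => by
    simpa [φ] using hu i
  obtain ⟨a, haM, ha⟩ := (WeakDual.isCompact_closedBall (0 : StrongDual ℝ H) M).exists_mapClusterPt (f := l)
    (le_principal_iff.mpr (mem_map.mpr (Eventually.of_forall hφ)))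
  obtain ⟨U, hUl, hUa⟩ := mapClusterPt_iff_ultrafilter.mp ha
  refine ⟨U, (InnerProductSpace.toDual ℝ H).symm (WeakDual.toStrongDual a), hUl, ?_, fun w => ?_⟩
  · simpa using haM
  · rw [InnerProductSpace.toDual_symm_apply]
    exact (((WeakDual.eval_continuous w).tendsto a).comp hUa).congr fun i =>
      InnerProductSpace.toDual_apply_apply

theorem tendsto_inner_of_weak_of_tendsto {ι : Type*} {l : Filter ι} {u : ι → H} {v : H}
    {M : ℝ} (hu : ∀ i, ‖u i‖ ≤ M) (huv : ∀ w, Tendsto (fun i => ⟪u i, w⟫) l (𝓝 ⟪v, w⟫))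
    {w : ι → H} {w' : H} (hw : Tendsto w l (𝓝 w')) :
    Tendsto (fun i => ⟪u i, w i⟫) l (𝓝 ⟪v, w'⟫) := by
  have hsmall : Tendsto (fun i => ⟪u i, w i - w'⟫) l (𝓝 0) := by
    refine squeeze_zero_norm (a := fun i => M * ‖w i - w'‖) (fun i => ?_) ?_
    · exact (norm_inner_le_norm _ _).trans (mul_le_mul_of_nonneg_right (hu i) (norm_nonneg _))
    · simpa using ((tendsto_sub_nhds_zero_iff.mpr hw).norm.const_mul M)
  simpa [inner_sub_right] using (huv w').add hsmall

theorem norm_le_of_tendsto_inner_self {ι : Type*} {l : Filter ι} [l.NeBot] {y : ι → H} {z : H}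
    {r : ℝ} (hyz : Tendsto (fun i => ⟪y i, z⟫) l (𝓝 ⟪z, z⟫)) (hr : ∀ᶠ i in l, ‖y i‖ ≤ r) :
    ‖z‖ ≤ r := by
  have hsq : ‖z‖ ^ 2 ≤ r * ‖z‖ := by
    rw [← real_inner_self_eq_norm_sq]
    refine le_of_tendsto hyz (hr.mono fun i hi => ?_)
    exact (real_inner_le_norm _ _).trans (mul_le_mul_of_nonneg_right hi (norm_nonneg z))
  obtain ⟨i, hi⟩ := hr.exists
  nlinarith [norm_nonneg (y i), norm_nonneg z]

end WeakCompactness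

section ImpulseControl

variable {H : Type*} [NormedAddCommGroup H] [InnerProductSpace ℝ H]

def reachableTimes (S : ℝ → H →L[ℝ] H) (P : H →L[ℝ] H) (y₀ : H) (r M τ : ℝ) : Set ℝ :=
  {T : ℝ | τ ≤ T ∧ ∃ u : H, ‖u‖ ≤ M ∧ ‖S T y₀ + S (T - τ) (P u)‖ ≤ r}

variable {S : ℝ → H →L[ℝ] H} {P : H →L[ℝ] H} {y₀ : H} {r M τ : ℝ}

theorem reachableTimes_nonempty {lam : ℝ} (hlam : 0 < lam)
    (hSdecay : ∀ t : ℝ, 0 ≤ t → ∀ y : H, ‖S t y‖ ≤ Real.exp (-(lam * t)) * ‖y‖)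
    (hr : 0 < r) (hM : 0 ≤ M) (hτ : 0 ≤ τ) : (reachableTimes S P y₀ r M τ).Nonempty := by
  have hdecay : Tendsto (fun T : ℝ => Real.exp (-(lam * T)) * ‖y₀‖) atTop (𝓝 0) := by
    simpa using (Real.tendsto_exp_atBot.comp
      (tendsto_neg_atTop_atBot.comp (tendsto_id.const_mul_atTop hlam))).mul_const ‖y₀‖
  obtain ⟨T, hTr, hτT⟩ := ((hdecay.eventually_lt_const hr).and (eventually_ge_atTop τ)).exists
  refine ⟨T, hτT, 0, by simpa using hM, ?_⟩
  simpa using (hSdecay T (hτ.trans hτT) y₀).trans hTr.le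

theorem tendsto_inner_impulseState {ι : Type*} {l : Filter ι}
    (hSsa : ∀ t : ℝ, 0 ≤ t → ∀ x z : H, ⟪S t x, z⟫ = ⟪x, S t z⟫)
    (hScont : ∀ y : H, ContinuousOn (fun t => S t y) (Ici (0 : ℝ)))
    (hPsa : ∀ x z : H, ⟪P x, z⟫ = ⟪x, P z⟫) (hτ : 0 ≤ τ)
    {T : ι → ℝ} {t : ℝ} (hT : Tendsto T l (𝓝 t)) (hτT : ∀ i, τ ≤ T i) (hτt : τ ≤ t)
    {u : ι → H} {v : H} (hu : ∀ i, ‖u i‖ ≤ M)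
    (huv : ∀ w, Tendsto (fun i => ⟪u i, w⟫) l (𝓝 ⟪v, w⟫)) (w : H) :
    Tendsto (fun i => ⟪S (T i) y₀ + S (T i - τ) (P (u i)), w⟫) l
      (𝓝 ⟪S t y₀ + S (t - τ) (P v), w⟫) := by
  have hS : ∀ (s : ι → ℝ) (s₀ : ℝ), Tendsto s l (𝓝 s₀) → 0 ≤ s₀ → (∀ i, 0 ≤ s i) →
      ∀ y, Tendsto (fun i => S (s i) y) l (𝓝 (S s₀ y)) := fun s s₀ hs hs₀ hs0 y =>
    (hScont y s₀ hs₀).tendsto.comp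
      (tendsto_nhdsWithin_of_tendsto_nhds_of_eventually_within _ hs (Eventually.of_forall hs0))
  have hdrift := Tendsto.inner (𝕜 := ℝ)
    (hS _ _ hT (hτ.trans hτt) (fun i => hτ.trans (hτT i)) y₀) (tendsto_const_nhds (x := w))
  have hcontrol := tendsto_inner_of_weak_of_tendsto hu huv
    (P.continuous.tendsto _ |>.comp (hS _ _ (hT.sub_const τ) (sub_nonneg.mpr hτt)
      (fun i => sub_nonneg.mpr (hτT i)) w))
  have hadj : ∀ s, 0 ≤ s → ∀ x, ⟪S s (P x), w⟫ = ⟪x, P (S s w)⟫ := fun s hs x => by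
    rw [hSsa s hs, hPsa]
  simp only [inner_add_left]
  rw [hadj _ (sub_nonneg.mpr hτt)]
  exact hdrift.add (hcontrol.congr fun i => (hadj _ (sub_nonneg.mpr (hτT i)) _).symm)

theorem isClosed_reachableTimes [CompleteSpace H]
    (hSsa : ∀ t : ℝ, 0 ≤ t → ∀ x z : H, ⟪S t x, z⟫ = ⟪x, S t z⟫)
    (hScont : ∀ y : H, ContinuousOn (fun t => S t y) (Ici (0 : ℝ)))
    (hPsa : ∀ x z : H, ⟪P x, z⟫ = ⟪x, P z⟫) (hτ : 0 ≤ τ) :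
    IsClosed (reachableTimes S P y₀ r M τ) := by
  refine isClosed_of_closure_subset fun t ht => ?_
  obtain ⟨T, hTA, hT⟩ := mem_closure_iff_seq_limit.mp ht
  have hτt : τ ≤ t := isClosed_Ici.mem_of_tendsto hT (Eventually.of_forall fun n => (hTA n).1)
  choose u hu hur using fun n => (hTA n).2
  obtain ⟨U, v, hU, hv, huv⟩ := exists_ultrafilter_tendsto_inner_of_norm_le (l := atTop) hu
  refine ⟨hτt, v, hv, norm_le_of_tendsto_inner_self (l := (U : Filter ℕ)) ?_ (Eventually.of_forall hur)⟩
  exact tendsto_inner_impulseState hSsa hScont hPsa hτ (hT.mono_left hU) (fun n => (hTA n).1) hτt hu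
    huv _

end ImpulseControl

theorem stmt_2_general
    {H : Type*} [NormedAddCommGroup H] [InnerProductSpace ℝ H] [CompleteSpace H]
    (lam : ℝ) (hlam : 0 < lam)
    (S : ℝ → H →L[ℝ] H)
    (hSsa : ∀ t : ℝ, 0 ≤ t → ∀ x z : H, ⟪S t x, z⟫ = ⟪x, S t z⟫)
    (hScont : ∀ y : H, ContinuousOn (fun t => S t y) (Set.Ici (0 : ℝ)))
    (hSdecay : ∀ t : ℝ, 0 ≤ t → ∀ y : H, ‖S t y‖ ≤ Real.exp (-(lam * t)) * ‖y‖)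
    (P : H →L[ℝ] H)
    (hPsa : ∀ x z : H, ⟪P x, z⟫ = ⟪x, P z⟫)
    (y₀ : H) (r : ℝ) (hr : 0 < r)
    (tS : ℝ → ℝ → ℝ)
    (htS : ∀ M τ : ℝ, tS M τ =
      sInf {T : ℝ | τ ≤ T ∧ ∃ u : H, ‖u‖ ≤ M ∧ ‖S T y₀ + S (T - τ) (P u)‖ ≤ r})
    (M τ : ℝ) (hM : 0 < M) (hτ : 0 ≤ τ) :
    τ ≤ tS M τ ∧
    ∃ u : H, ‖u‖ ≤ M ∧ ‖S (tS M τ) y₀ + S (tS M τ - τ) (P u)‖ ≤ r := by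
  rw [htS M τ]
  have hbdd : BddBelow (reachableTimes S P y₀ r M τ) := ⟨τ, fun T hT => hT.1⟩
  exact (isClosed_reachableTimes hSsa hScont hPsa hτ).csInf_mem
    (reachableTimes_nonempty hlam hSdecay hr hM.le hτ) hbdd

theorem stmt_2
    {H : Type*} [NormedAddCommGroup H] [InnerProductSpace ℝ H] [CompleteSpace H]
    (lam : ℝ) (hlam : 0 < lam)
    (S : ℝ → H →L[ℝ] H)
    (hS0 : S 0 = ContinuousLinearMap.id ℝ H)
    (hSadd : ∀ s t : ℝ, 0 ≤ s → 0 ≤ t → S (s + t) = (S s).comp (S t))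
    (hSsa : ∀ t : ℝ, 0 ≤ t → ∀ x z : H, ⟪S t x, z⟫ = ⟪x, S t z⟫)
    (hScont : ∀ y : H, ContinuousOn (fun t => S t y) (Set.Ici (0 : ℝ)))
    (hSdecay : ∀ t : ℝ, 0 ≤ t → ∀ y : H, ‖S t y‖ ≤ Real.exp (-(lam * t)) * ‖y‖)
    (P : H →L[ℝ] H)
    (hPsa : ∀ x z : H, ⟪P x, z⟫ = ⟪x, P z⟫)
    (hPnorm : ∀ u : H, ‖P u‖ ≤ ‖u‖)
    (y₀ : H) (r : ℝ) (hr : 0 < r)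
    (tS : ℝ → ℝ → ℝ)
    (htS : ∀ M τ : ℝ, tS M τ =
      sInf {T : ℝ | τ ≤ T ∧ ∃ u : H, ‖u‖ ≤ M ∧ ‖S T y₀ + S (T - τ) (P u)‖ ≤ r})
    (M τ : ℝ) (hM : 0 < M) (hτ : 0 ≤ τ) :
    τ ≤ tS M τ ∧
    ∃ u : H, ‖u‖ ≤ M ∧ ‖S (tS M τ) y₀ + S (tS M τ - τ) (P u)‖ ≤ r :=
  stmt_2_general lam hlam S hSsa hScont hSdecay P hPsa y₀ r hr tS htS M τ hM hτ
end

section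
/- Let M > 0 and τ ≥ 0 satisfy condition (★). Then the minimal time satisfies t*(M,τ) > τ. -/
open RealInnerProductSpace Filter

/-!
If `t*(M, τ) = τ`, there are times `T n ↓ τ` and controls `u n ∈ U_M` with
`‖S (T n) y₀ + S (T n - τ) (P (u n))‖ ≤ r`. A weak cluster point `u₀ ∈ U_M` of the controls
exists by Banach–Alaoglu, and since `S (T n - τ) → id` strongly while `S`, `P` are self-adjoint,
the states cluster weakly at `z = S τ y₀ + P u₀`. Weak lower semicontinuity of the norm gives
`‖z‖ ≤ r`, contradicting (★). The admissible set is nonempty (so its infimum is not the junk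
value `0`) because the zero control steers `y₀` into the ball for large times by the decay of `S`.
-/

open Topology Set Metric

theorem MapClusterPt.add_tendsto {α X : Type*} [TopologicalSpace X] [Add X] [ContinuousAdd X]
    {F : Filter α} {u v : α → X} {x y : X} (hu : MapClusterPt x F u) (hv : Tendsto v F (𝓝 y)) :
    MapClusterPt (x + y) F fun a => u a + v a := by
  obtain ⟨U, hUF, hU⟩ := mapClusterPt_iff_ultrafilter.1 hu
  exact mapClusterPt_iff_ultrafilter.2 ⟨U, hUF, hU.add (hv.mono_left hUF)⟩

section InnerProductSpace

variable {H : Type*} [NormedAddCommGroup H] [InnerProductSpace ℝ H] {ι : Type*} {l : Filter ι}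

/-- Banach–Alaoglu, transported to `H` by the Riesz representation. -/
theorem exists_norm_le_forall_mapClusterPt_inner [CompleteSpace H] [l.NeBot] {u : ι → H}
    {M : ℝ} (hu : ∀ i, ‖u i‖ ≤ M) :
    ∃ u₀ : H, ‖u₀‖ ≤ M ∧ ∀ w, MapClusterPt ⟪u₀, w⟫ l fun i => ⟪u i, w⟫ := by
  let D := InnerProductSpace.toDual ℝ H
  have hball : ∀ i, StrongDual.toWeakDual (D (u i)) ∈
      WeakDual.toStrongDual ⁻¹' closedBall (0 : StrongDual ℝ H) M := by
    simpa [D] using hu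
  obtain ⟨f, hf, hcl⟩ := (WeakDual.isCompact_closedBall (𝕜 := ℝ) (E := H) 0 M)
    |>.exists_mapClusterPt (f := l) (tendsto_principal.2 (.of_forall hball))
  refine ⟨D.symm (WeakDual.toStrongDual f), by simpa [D] using hf, fun w => ?_⟩
  simpa [D, Function.comp_def, InnerProductSpace.toDual_symm_apply] using
    hcl.tendsto_comp (WeakDual.eval_continuous w).continuousAt

theorem norm_le_of_mapClusterPt_inner {x : ι → H} {z : H} {r : ℝ} (hr : 0 ≤ r)
    (hx : ∀ i, ‖x i‖ ≤ r) (hz : MapClusterPt ⟪z, z⟫ l fun i => ⟪x i, z⟫) : ‖z‖ ≤ r := by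
  have hzz : ⟪z, z⟫ ≤ r * ‖z‖ := by
    by_contra! hlt
    obtain ⟨i, hi⟩ := (hz.frequently (eventually_gt_nhds hlt)).exists
    have := (real_inner_le_norm (x i) z).trans (mul_le_mul_of_nonneg_right (hx i) (norm_nonneg z))
    linarith
  rw [real_inner_self_eq_norm_sq] at hzz
  nlinarith [norm_nonneg z]

theorem tendsto_inner_of_tendsto_zero {u x : ι → H} {M : ℝ} (hu : ∀ i, ‖u i‖ ≤ M)
    (hx : Tendsto x l (𝓝 0)) : Tendsto (fun i => ⟪u i, x i⟫) l (𝓝 0) := by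
  refine squeeze_zero_norm (fun i => ?_) (by simpa using hx.norm.const_mul M)
  exact (norm_inner_le_norm _ _).trans (mul_le_mul_of_nonneg_right (hu i) (norm_nonneg _))

end InnerProductSpace

section Semigroup

variable {H : Type*} [NormedAddCommGroup H] [InnerProductSpace ℝ H] {S : ℝ → H →L[ℝ] H}
  {ι : Type*} {l : Filter ι}

theorem tendsto_apply_of_continuousOn_Ici (hScont : ∀ y, ContinuousOn (fun t => S t y) (Ici 0))
    {T : ι → ℝ} {t : ℝ} (ht : 0 ≤ t) (hT : Tendsto T l (𝓝 t)) (hT0 : ∀ i, 0 ≤ T i) (y : H) :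
    Tendsto (fun i => S (T i) y) l (𝓝 (S t y)) :=
  (hScont y t ht).tendsto.comp (tendsto_nhdsWithin_iff.2 ⟨hT, .of_forall hT0⟩)

theorem tendsto_apply_atTop_zero_of_norm_le_exp {lam : ℝ} (hlam : 0 < lam)
    (hSdecay : ∀ t : ℝ, 0 ≤ t → ∀ y : H, ‖S t y‖ ≤ Real.exp (-(lam * t)) * ‖y‖) (y : H) :
    Tendsto (fun t => S t y) atTop (𝓝 0) := by
  have hexp : Tendsto (fun t => Real.exp (-(lam * t)) * ‖y‖) atTop (𝓝 0) := by
    simpa using (Real.tendsto_exp_neg_atTop_nhds_zero.comp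
      (tendsto_id.const_mul_atTop hlam)).mul_const ‖y‖
  exact squeeze_zero_norm' ((eventually_ge_atTop 0).mono fun t ht => hSdecay t ht y) hexp

/-- Self-adjointness of `S` and `P` moves the factor `S (T i - τ)`, which converges only
strongly, onto the fixed vector `w`. -/
theorem tendsto_inner_impulse_sub_inner (hS0 : S 0 = ContinuousLinearMap.id ℝ H)
    (hSsa : ∀ t : ℝ, 0 ≤ t → ∀ x z : H, ⟪S t x, z⟫ = ⟪x, S t z⟫)
    (hScont : ∀ y, ContinuousOn (fun t => S t y) (Ici 0))
    {P : H →L[ℝ] H} (hPsa : ∀ x z : H, ⟪P x, z⟫ = ⟪x, P z⟫)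
    {τ : ℝ} (hτ : 0 ≤ τ) {T : ι → ℝ} (hT : Tendsto T l (𝓝 τ)) (hτT : ∀ i, τ ≤ T i)
    {u : ι → H} {M : ℝ} (hu : ∀ i, ‖u i‖ ≤ M) (y₀ w : H) :
    Tendsto (fun i => ⟪S (T i) y₀ + S (T i - τ) (P (u i)), w⟫ - ⟪u i, P w⟫) l
      (𝓝 ⟪S τ y₀, w⟫) := by
  have hfree : Tendsto (fun i => S (T i) y₀) l (𝓝 (S τ y₀)) :=
    tendsto_apply_of_continuousOn_Ici hScont hτ hT (fun i => hτ.trans (hτT i)) y₀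
  have hshift : Tendsto (fun i => S (T i - τ) w) l (𝓝 w) := by
    simpa [hS0] using tendsto_apply_of_continuousOn_Ici hScont le_rfl
      (by simpa using hT.sub_const τ) (fun i => sub_nonneg.2 (hτT i)) w
  have hcontrol : Tendsto (fun i => ⟪u i, P (S (T i - τ) w) - P w⟫) l (𝓝 0) :=
    tendsto_inner_of_tendsto_zero hu
      (by simpa using ((P.continuous.tendsto w).comp hshift).sub_const (P w))
  refine (add_zero ⟪S τ y₀, w⟫ ▸ (hfree.inner tendsto_const_nhds).add hcontrol).congr fun i => ?_
  rw [inner_add_left, hSsa _ (sub_nonneg.2 (hτT i)), hPsa, inner_sub_right]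
  ring

theorem exists_limit_control_of_impulse_norm_le [CompleteSpace H] [l.NeBot]
    (hS0 : S 0 = ContinuousLinearMap.id ℝ H)
    (hSsa : ∀ t : ℝ, 0 ≤ t → ∀ x z : H, ⟪S t x, z⟫ = ⟪x, S t z⟫)
    (hScont : ∀ y, ContinuousOn (fun t => S t y) (Ici 0))
    {P : H →L[ℝ] H} (hPsa : ∀ x z : H, ⟪P x, z⟫ = ⟪x, P z⟫)
    {τ : ℝ} (hτ : 0 ≤ τ) {T : ι → ℝ} (hT : Tendsto T l (𝓝 τ)) (hτT : ∀ i, τ ≤ T i)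
    {u : ι → H} {M : ℝ} (hu : ∀ i, ‖u i‖ ≤ M) {y₀ : H} {r : ℝ} (hr : 0 ≤ r)
    (hy : ∀ i, ‖S (T i) y₀ + S (T i - τ) (P (u i))‖ ≤ r) :
    ∃ u₀ : H, ‖u₀‖ ≤ M ∧ ‖S τ y₀ + P u₀‖ ≤ r := by
  obtain ⟨u₀, hu₀, hcl⟩ := exists_norm_le_forall_mapClusterPt_inner (l := l) hu
  refine ⟨u₀, hu₀, norm_le_of_mapClusterPt_inner (l := l) hr hy ?_⟩
  set z := S τ y₀ + P u₀
  convert (hcl (P z)).add_tendsto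
    (tendsto_inner_impulse_sub_inner hS0 hSsa hScont hPsa hτ hT hτT hu y₀ z) using 1
  · rw [← hPsa, ← inner_add_left, add_comm]
  · simp only [add_sub_cancel]

end Semigroup

theorem stmt_4_general
    {H : Type*} [NormedAddCommGroup H] [InnerProductSpace ℝ H] [CompleteSpace H]
    (lam : ℝ) (hlam : 0 < lam)
    (S : ℝ → H →L[ℝ] H)
    (hS0 : S 0 = ContinuousLinearMap.id ℝ H)
    (hSsa : ∀ t : ℝ, 0 ≤ t → ∀ x z : H, ⟪S t x, z⟫ = ⟪x, S t z⟫)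
    (hScont : ∀ y : H, ContinuousOn (fun t => S t y) (Set.Ici (0 : ℝ)))
    (hSdecay : ∀ t : ℝ, 0 ≤ t → ∀ y : H, ‖S t y‖ ≤ Real.exp (-(lam * t)) * ‖y‖)
    (P : H →L[ℝ] H)
    (hPsa : ∀ x z : H, ⟪P x, z⟫ = ⟪x, P z⟫)
    (y₀ : H) (r : ℝ) (hr : 0 < r)
    (tS : ℝ → ℝ → ℝ)
    (htS : ∀ M τ : ℝ, tS M τ =
      sInf {T : ℝ | τ ≤ T ∧ ∃ u : H, ‖u‖ ≤ M ∧ ‖S T y₀ + S (T - τ) (P u)‖ ≤ r})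
    (M τ : ℝ) (hM : 0 < M) (hτ : 0 ≤ τ)
    (hstar : ∀ u : H, ‖u‖ ≤ M → r < ‖S τ y₀ + P u‖) :
    τ < tS M τ := by
  set A := {T : ℝ | τ ≤ T ∧ ∃ u : H, ‖u‖ ≤ M ∧ ‖S T y₀ + S (T - τ) (P u)‖ ≤ r}
  have hA : A.Nonempty := by
    have hsmall : ∀ᶠ T in atTop, ‖S T y₀‖ ≤ r :=
      (tendsto_zero_iff_norm_tendsto_zero.1
        (tendsto_apply_atTop_zero_of_norm_le_exp hlam hSdecay y₀)).eventually_le_const hr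
    obtain ⟨T, hτT, hT⟩ := ((eventually_ge_atTop τ).and hsmall).exists
    exact ⟨T, hτT, 0, by simpa using hM.le, by simpa using hT⟩
  have hAτ : BddBelow A := ⟨τ, fun _ hT => hT.1⟩
  rw [htS]
  refine (le_csInf hA fun _ hT => hT.1).lt_of_ne fun hτA => ?_
  obtain ⟨T, -, hT, hTA⟩ := exists_seq_tendsto_sInf hA hAτ
  choose hτT u hu hy using hTA
  obtain ⟨u₀, hu₀, hy₀⟩ :=
    exists_limit_control_of_impulse_norm_le hS0 hSsa hScont hPsa hτ (hτA ▸ hT) hτT hu hr.le hy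
  exact (hstar u₀ hu₀).not_ge hy₀

theorem stmt_4
    {H : Type*} [NormedAddCommGroup H] [InnerProductSpace ℝ H] [CompleteSpace H]
    (lam : ℝ) (hlam : 0 < lam)
    (S : ℝ → H →L[ℝ] H)
    (hS0 : S 0 = ContinuousLinearMap.id ℝ H)
    (hSadd : ∀ s t : ℝ, 0 ≤ s → 0 ≤ t → S (s + t) = (S s).comp (S t))
    (hSsa : ∀ t : ℝ, 0 ≤ t → ∀ x z : H, ⟪S t x, z⟫ = ⟪x, S t z⟫)
    (hScont : ∀ y : H, ContinuousOn (fun t => S t y) (Set.Ici (0 : ℝ)))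
    (hSdecay : ∀ t : ℝ, 0 ≤ t → ∀ y : H, ‖S t y‖ ≤ Real.exp (-(lam * t)) * ‖y‖)
    (P : H →L[ℝ] H)
    (hPsa : ∀ x z : H, ⟪P x, z⟫ = ⟪x, P z⟫)
    (hPnorm : ∀ u : H, ‖P u‖ ≤ ‖u‖)
    (y₀ : H) (r : ℝ) (hr : 0 < r)
    (tS : ℝ → ℝ → ℝ)
    (htS : ∀ M τ : ℝ, tS M τ =
      sInf {T : ℝ | τ ≤ T ∧ ∃ u : H, ‖u‖ ≤ M ∧ ‖S T y₀ + S (T - τ) (P u)‖ ≤ r})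
    (M τ : ℝ) (hM : 0 < M) (hτ : 0 ≤ τ)
    (hstar : ∀ u : H, ‖u‖ ≤ M → r < ‖S τ y₀ + P u‖) :
    τ < tS M τ :=
  stmt_4_general lam hlam S hS0 hSsa hScont hSdecay P hPsa y₀ r hr tS htS M τ hM hτ hstar
end

section
/- (Uniqueness of the optimal terminal state) Let M > 0 and τ ≥ 0 satisfy condition (★), and write t* := t*(M,τ). If u₁, u₂ ∈ U_M satisfy ‖y^τ(t*; y₀, u₁)‖ ≤ r and ‖y^τ(t*; y₀, u₂)‖ ≤ r, then y^τ(t*; y₀, u₁) = y^τ(t*; y₀, u₂); that is, the set {S t* y₀ + S (t*−τ)(P u) : u ∈ U_M} intersects the closed ball of radius r centered at 0 in exactly one point. -/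
open RealInnerProductSpace Filter

theorem stmt_5
    {H : Type*} [NormedAddCommGroup H] [InnerProductSpace ℝ H] [CompleteSpace H]
    (lam : ℝ) (hlam : 0 < lam)
    (S : ℝ → H →L[ℝ] H)
    (hS0 : S 0 = ContinuousLinearMap.id ℝ H)
    (hSadd : ∀ s t : ℝ, 0 ≤ s → 0 ≤ t → S (s + t) = (S s).comp (S t))
    (hSsa : ∀ t : ℝ, 0 ≤ t → ∀ x z : H, ⟪S t x, z⟫ = ⟪x, S t z⟫)
    (hScont : ∀ y : H, ContinuousOn (fun t => S t y) (Set.Ici (0 : ℝ)))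
    (hSdecay : ∀ t : ℝ, 0 ≤ t → ∀ y : H, ‖S t y‖ ≤ Real.exp (-(lam * t)) * ‖y‖)
    (P : H →L[ℝ] H)
    (hPsa : ∀ x z : H, ⟪P x, z⟫ = ⟪x, P z⟫)
    (hPnorm : ∀ u : H, ‖P u‖ ≤ ‖u‖)
    (y₀ : H) (r : ℝ) (hr : 0 < r)
    (tS : ℝ → ℝ → ℝ)
    (htS : ∀ M τ : ℝ, tS M τ =
      sInf {T : ℝ | τ ≤ T ∧ ∃ u : H, ‖u‖ ≤ M ∧ ‖S T y₀ + S (T - τ) (P u)‖ ≤ r})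
    (M τ : ℝ) (hM : 0 < M) (hτ : 0 ≤ τ)
    (hstar : ∀ u : H, ‖u‖ ≤ M → r < ‖S τ y₀ + P u‖)
    (u₁ u₂ : H) (h₁ : ‖u₁‖ ≤ M) (h₂ : ‖u₂‖ ≤ M)
    (hy₁ : ‖S (tS M τ) y₀ + S (tS M τ - τ) (P u₁)‖ ≤ r)
    (hy₂ : ‖S (tS M τ) y₀ + S (tS M τ - τ) (P u₂)‖ ≤ r) :
    S (tS M τ) y₀ + S (tS M τ - τ) (P u₁) = S (tS M τ) y₀ + S (tS M τ - τ) (P u₂) := by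
  by_contra hne
  set A := {T : ℝ | τ ≤ T ∧ ∃ u : H, ‖u‖ ≤ M ∧ ‖S T y₀ + S (T - τ) (P u)‖ ≤ r} with hA
  have ht : tS M τ = sInf A := htS M τ
  set t := tS M τ with htdef
  -- A is nonempty
  have hAne : A.Nonempty := by
    refine ⟨max τ (‖y₀‖ / (r * lam)), le_max_left _ _, 0, by simpa using hM.le, ?_⟩
    set T₀ := max τ (‖y₀‖ / (r * lam)) with hT₀
    have hT₀0 : 0 ≤ T₀ := le_trans hτ (le_max_left _ _)
    have h1 : ‖y₀‖ ≤ T₀ * (r * lam) :=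
      (div_le_iff₀ (by positivity)).mp (le_max_right _ _)
    have h2 := Real.add_one_le_exp (lam * T₀)
    have h3 : Real.exp (-(lam * T₀)) * ‖y₀‖ ≤ r := by
      rw [Real.exp_neg, inv_mul_le_iff₀ (Real.exp_pos _)]
      nlinarith [hr.le]
    simpa using le_trans (hSdecay T₀ hT₀0 y₀) h3
  have hAbdd : BddBelow A := ⟨τ, fun x hx => hx.1⟩
  have htτ : τ ≤ t := by rw [ht]; exact le_csInf hAne (fun x hx => hx.1)
  -- t > τ
  have htgt : τ < t := by
    rcases lt_or_eq_of_le htτ with h | h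
    · exact h
    · exfalso
      rw [← h] at hy₁
      simp only [sub_self, hS0, ContinuousLinearMap.id_apply] at hy₁
      exact absurd hy₁ (not_le.mpr (hstar u₁ h₁))
  -- midpoint control
  set u : H := (2:ℝ)⁻¹ • (u₁ + u₂) with hu_def
  have hu : ‖u‖ ≤ M := by
    rw [hu_def, norm_smul]
    have := norm_add_le u₁ u₂
    simp only [norm_inv, Real.norm_ofNat]
    nlinarith
  set y₁' := S t y₀ + S (t - τ) (P u₁) with hy₁'
  set y₂' := S t y₀ + S (t - τ) (P u₂) with hy₂'
  set f : ℝ → H := fun s => S s y₀ + S (s - τ) (P u) with hf_def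
  have hfy : f t = (2:ℝ)⁻¹ • (y₁' + y₂') := by
    simp only [hf_def, hy₁', hy₂', hu_def, map_add, map_smul]
    module
  -- strict convexity: ‖f t‖ < r
  have hsub : 0 < ‖y₁' - y₂'‖ := by
    rw [norm_pos_iff, sub_ne_zero]
    exact hne
  have hpar := parallelogram_law_with_norm ℝ y₁' y₂'
  have hft : ‖f t‖ < r := by
    rw [hfy, norm_smul]
    simp only [norm_inv, Real.norm_ofNat]
    nlinarith [norm_nonneg (y₁' + y₂'), norm_nonneg y₁', norm_nonneg y₂', hy₁, hy₂]
  -- continuity of f on Ici τ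
  have hf : ContinuousOn f (Set.Ici τ) := by
    apply ContinuousOn.add
    · exact (hScont y₀).mono (Set.Ici_subset_Ici.mpr hτ)
    · refine (hScont (P u)).comp (continuousOn_id.sub continuousOn_const) ?_
      intro s hs
      simp only [Set.mem_Ici, id] at *
      linarith
  have hfc : ContinuousWithinAt f (Set.Ici τ) t := hf.continuousWithinAt (Set.mem_Ici.mpr htτ)
  obtain ⟨δ, hδ, hball⟩ := Metric.continuousWithinAt_iff.mp hfc (r - ‖f t‖) (by linarith)
  set s := max ((τ + t) / 2) (t - δ / 2) with hs_def
  have hs1 : τ ≤ s := le_trans (by linarith) (le_max_left _ _)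
  have hs2 : s < t := max_lt (by linarith) (by linarith)
  have hs3 : dist s t < δ := by
    rw [Real.dist_eq, abs_of_nonpos (by linarith)]
    have : t - δ / 2 ≤ s := le_max_right _ _
    linarith
  have hfs := hball (Set.mem_Ici.mpr hs1) hs3
  rw [dist_eq_norm] at hfs
  have hfsr : ‖f s‖ ≤ r := by
    have := norm_sub_norm_le (f s) (f t)
    linarith
  have : s ∈ A := ⟨hs1, u, hu, hfsr⟩
  have := csInf_le hAbdd this
  rw [← ht] at this
  linarith
end

section
/- (Maximum condition / bang-bang form of the optimal control) Let M > 0 and τ ≥ 0 satisfy condition (★), write t* := t*(M,τ), and let u* be an optimal control for (TP)^τ_M. Then there exists φ₀ ∈ H with φ₀ ≠ 0 such that ⟨u, P(S (t*−τ) φ₀)⟩ ≤ ⟨u*, P(S (t*−τ) φ₀)⟩ for all u ∈ U_M; moreover P(S (t*−τ) φ₀) ≠ 0 and u* = M · P(S (t*−τ) φ₀) / ‖P(S (t*−τ) φ₀)‖. -/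
open RealInnerProductSpace Filter
open Topology

private lemma stmt_7_aux
    {H : Type*} [NormedAddCommGroup H] [InnerProductSpace ℝ H]
    (M : ℝ) (hM : 0 < M) (ustar v : H) (hustar : ‖ustar‖ ≤ M) (hvne : v ≠ 0)
    (hmax : ∀ u : H, ‖u‖ ≤ M → ⟪u, v⟫ ≤ ⟪ustar, v⟫) :
    ustar = (M / ‖v‖) • v := by
  have hvn : 0 < ‖v‖ := norm_pos_iff.mpr hvne
  have hu1n : ‖(M / ‖v‖) • v‖ ≤ M := by
    rw [norm_smul, Real.norm_of_nonneg (div_nonneg hM.le (norm_nonneg _)),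
      div_mul_cancel₀ _ (ne_of_gt hvn)]
  have h1 : ⟪(M / ‖v‖) • v, v⟫ = M * ‖v‖ := by
    rw [real_inner_smul_left, real_inner_self_eq_norm_sq]
    field_simp
  have h2 : M * ‖v‖ ≤ ⟪ustar, v⟫ := by
    have := hmax ((M / ‖v‖) • v) hu1n
    rw [h1] at this
    exact this
  have h3 : ⟪ustar, v⟫ ≤ ‖ustar‖ * ‖v‖ := real_inner_le_norm _ _
  have h4 : ‖ustar‖ * ‖v‖ ≤ M * ‖v‖ := mul_le_mul_of_nonneg_right hustar hvn.le
  have h5 : ‖ustar‖ = M := by nlinarith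
  have h6 : ⟪ustar, v⟫ = ‖ustar‖ * ‖v‖ := by linarith
  have h7 : ‖v‖ • ustar = ‖ustar‖ • v := inner_eq_norm_mul_iff_real.mp h6
  rw [h5] at h7
  have h8 : (‖v‖)⁻¹ • (‖v‖ • ustar) = (‖v‖)⁻¹ • (M • v) := by rw [h7]
  rw [smul_smul, smul_smul, inv_mul_cancel₀ (ne_of_gt hvn), one_smul] at h8
  rw [h8]
  congr 1
  field_simp

theorem stmt_7
    {H : Type*} [NormedAddCommGroup H] [InnerProductSpace ℝ H] [CompleteSpace H]
    (lam : ℝ) (hlam : 0 < lam)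
    (S : ℝ → H →L[ℝ] H)
    (hS0 : S 0 = ContinuousLinearMap.id ℝ H)
    (hSadd : ∀ s t : ℝ, 0 ≤ s → 0 ≤ t → S (s + t) = (S s).comp (S t))
    (hSsa : ∀ t : ℝ, 0 ≤ t → ∀ x z : H, ⟪S t x, z⟫ = ⟪x, S t z⟫)
    (hScont : ∀ y : H, ContinuousOn (fun t => S t y) (Set.Ici (0 : ℝ)))
    (hSdecay : ∀ t : ℝ, 0 ≤ t → ∀ y : H, ‖S t y‖ ≤ Real.exp (-(lam * t)) * ‖y‖)
    (P : H →L[ℝ] H)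
    (hPsa : ∀ x z : H, ⟪P x, z⟫ = ⟪x, P z⟫)
    (hPnorm : ∀ u : H, ‖P u‖ ≤ ‖u‖)
    (y₀ : H) (r : ℝ) (hr : 0 < r)
    (tS : ℝ → ℝ → ℝ)
    (htS : ∀ M τ : ℝ, tS M τ =
      sInf {T : ℝ | τ ≤ T ∧ ∃ u : H, ‖u‖ ≤ M ∧ ‖S T y₀ + S (T - τ) (P u)‖ ≤ r})
    (hUC : ∀ φ : H, φ ≠ 0 → ∀ t : ℝ, 0 < t → P (S t φ) ≠ 0)
    (M τ : ℝ) (hM : 0 < M) (hτ : 0 ≤ τ)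
    (hstar : ∀ u : H, ‖u‖ ≤ M → r < ‖S τ y₀ + P u‖)
    (ustar : H) (hustar : ‖ustar‖ ≤ M)
    (hopt : ‖S (tS M τ) y₀ + S (tS M τ - τ) (P ustar)‖ ≤ r) :
    ∃ φ₀ : H, φ₀ ≠ 0 ∧
      (∀ u : H, ‖u‖ ≤ M →
        ⟪u, P (S (tS M τ - τ) φ₀)⟫ ≤ ⟪ustar, P (S (tS M τ - τ) φ₀)⟫) ∧
      P (S (tS M τ - τ) φ₀) ≠ 0 ∧
      ustar = (M / ‖P (S (tS M τ - τ) φ₀)‖) • P (S (tS M τ - τ) φ₀) := by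
  set ts := tS M τ with hts
  set A : Set ℝ := {T : ℝ | τ ≤ T ∧ ∃ u : H, ‖u‖ ≤ M ∧ ‖S T y₀ + S (T - τ) (P u)‖ ≤ r}
    with hAdef
  have htsA : ts = sInf A := htS M τ
  -- A is nonempty
  have hAne : A.Nonempty := by
    rcases eq_or_ne y₀ 0 with h0 | h0
    · refine ⟨τ, le_refl τ, 0, by simpa using hM.le, ?_⟩
      simp [h0, map_zero, hr.le]
    · have hy0 : 0 < ‖y₀‖ := norm_pos_iff.mpr h0
      set T := max τ (Real.log (‖y₀‖ / r) / lam) with hT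
      have hτT : τ ≤ T := le_max_left _ _
      have hT0 : 0 ≤ T := le_trans hτ hτT
      refine ⟨T, hτT, 0, by simpa using hM.le, ?_⟩
      have hb := hSdecay T hT0 y₀
      have hlog : Real.log (‖y₀‖ / r) ≤ lam * T := by
        have h1 : Real.log (‖y₀‖ / r) / lam ≤ T := le_max_right _ _
        calc Real.log (‖y₀‖ / r) = lam * (Real.log (‖y₀‖ / r) / lam) := by
              field_simp
          _ ≤ lam * T := by nlinarith
      have hexp : Real.exp (-(lam * T)) ≤ r / ‖y₀‖ := by
        have h1 : Real.exp (-(lam * T)) ≤ Real.exp (-(Real.log (‖y₀‖ / r))) :=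
          Real.exp_le_exp.mpr (by linarith)
        have h2 : Real.exp (-(Real.log (‖y₀‖ / r))) = r / ‖y₀‖ := by
          rw [Real.exp_neg, Real.exp_log (div_pos hy0 hr), inv_div]
        linarith
      have hfin : ‖S T y₀‖ ≤ r := by
        calc ‖S T y₀‖ ≤ Real.exp (-(lam * T)) * ‖y₀‖ := hb
          _ ≤ (r / ‖y₀‖) * ‖y₀‖ := by nlinarith
          _ = r := by field_simp
      simpa [map_zero] using hfin
  have hAbdd : BddBelow A := ⟨τ, fun x hx => hx.1⟩
  -- τ ≤ ts
  have hτts : τ ≤ ts := by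
    rw [htsA]
    exact le_csInf hAne fun x hx => hx.1
  -- τ < ts
  have hτlt : τ < ts := by
    rcases lt_or_eq_of_le hτts with h | h
    · exact h
    · exfalso
      have h2 := hopt
      rw [← h, sub_self, hS0] at h2
      simp only [ContinuousLinearMap.id_apply] at h2
      exact absurd h2 (not_le.mpr (hstar ustar hustar))
  have hσpos : 0 < ts - τ := sub_pos.mpr hτlt
  have hts0 : 0 ≤ ts := le_trans hτ hτts
  -- minimality : all admissible controls at time ts give norm ≥ r
  have hmin : ∀ u : H, ‖u‖ ≤ M → r ≤ ‖S ts y₀ + S (ts - τ) (P u)‖ := by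
    intro u hu
    by_contra hcon
    push_neg at hcon
    have hg : ContinuousOn (fun T => ‖S T y₀ + S (T - τ) (P u)‖) (Set.Ici τ) := by
      apply ContinuousOn.norm
      apply ContinuousOn.add
      · exact (hScont y₀).mono (Set.Ici_subset_Ici.mpr hτ)
      · have h1 : ContinuousOn (fun T : ℝ => T - τ) (Set.Ici τ) :=
          (continuous_id.sub continuous_const).continuousOn
        have h2 : Set.MapsTo (fun T : ℝ => T - τ) (Set.Ici τ) (Set.Ici 0) := by
          intro x hx
          simp only [Set.mem_Ici] at *
          linarith
        exact (hScont (P u)).comp h1 h2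
    have hcwa : Filter.Tendsto (fun T => ‖S T y₀ + S (T - τ) (P u)‖)
        (𝓝[Set.Ioo τ ts] ts) (𝓝 (‖S ts y₀ + S (ts - τ) (P u)‖)) := by
      have h3 := hg ts (Set.mem_Ici.mpr hτts)
      exact h3.mono_left (nhdsWithin_mono ts (Set.Ioo_subset_Icc_self.trans Set.Icc_subset_Ici_self))
    have hev : ∀ᶠ T in 𝓝[Set.Ioo τ ts] ts, ‖S T y₀ + S (T - τ) (P u)‖ < r :=
      hcwa.eventually_lt_const hcon
    have hne : (𝓝[Set.Ioo τ ts] ts).NeBot := by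
      rw [nhdsWithin_Ioo_eq_nhdsLT hτlt]
      infer_instance
    obtain ⟨T, hT1, hT2⟩ := (hev.and self_mem_nhdsWithin).exists
    have hTA : T ∈ A := ⟨hT2.1.le, u, hu, hT1.le⟩
    have h4 : sInf A ≤ T := csInf_le hAbdd hTA
    rw [← htsA] at h4
    exact absurd h4 (not_le.mpr hT2.2)
  set z : H := S ts y₀ + S (ts - τ) (P ustar) with hz
  have hzr : ‖z‖ = r := le_antisymm hopt (hmin ustar hustar)
  have hzne : z ≠ 0 := by
    intro h
    rw [h, norm_zero] at hzr
    exact absurd hzr.symm (ne_of_gt hr)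
  -- variational inequality
  have hmax0 : ∀ u : H, ‖u‖ ≤ M → 0 ≤ ⟪z, S (ts - τ) (P u) - S (ts - τ) (P ustar)⟫ := by
    intro u hu
    by_contra hc
    push_neg at hc
    set w : H := S (ts - τ) (P u) - S (ts - τ) (P ustar) with hw
    have hwne : w ≠ 0 := by
      intro h
      rw [h, inner_zero_right] at hc
      exact lt_irrefl 0 hc
    have hwn : 0 < ‖w‖ := norm_pos_iff.mpr hwne
    have hwn2 : 0 < ‖w‖ ^ 2 := pow_pos hwn 2
    set θ : ℝ := min 1 (-⟪z, w⟫ / ‖w‖ ^ 2) with hθ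
    have hθ0 : 0 < θ := lt_min one_pos (div_pos (neg_pos.mpr hc) hwn2)
    have hθ1 : θ ≤ 1 := min_le_left _ _
    have hθb : θ * ‖w‖ ^ 2 ≤ -⟪z, w⟫ := by
      have h1 : θ ≤ -⟪z, w⟫ / ‖w‖ ^ 2 := min_le_right _ _
      rw [le_div_iff₀ hwn2] at h1
      linarith
    have hmem : ‖ustar + θ • (u - ustar)‖ ≤ M := by
      have heq : ustar + θ • (u - ustar) = (1 - θ) • ustar + θ • u := by
        rw [sub_smul, smul_sub, one_smul]
        abel
      rw [heq]
      calc ‖(1 - θ) • ustar + θ • u‖ ≤ ‖(1 - θ) • ustar‖ + ‖θ • u‖ := norm_add_le _ _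
        _ = (1 - θ) * ‖ustar‖ + θ * ‖u‖ := by
            rw [norm_smul, norm_smul, Real.norm_of_nonneg (by linarith),
              Real.norm_of_nonneg hθ0.le]
        _ ≤ (1 - θ) * M + θ * M := by
            have hm1 := mul_le_mul_of_nonneg_left hustar (by linarith : (0:ℝ) ≤ 1 - θ)
            have hm2 := mul_le_mul_of_nonneg_left hu hθ0.le
            linarith
        _ = M := by ring
    have h1 : r ≤ ‖S ts y₀ + S (ts - τ) (P (ustar + θ • (u - ustar)))‖ := hmin _ hmem
    have h2 : S ts y₀ + S (ts - τ) (P (ustar + θ • (u - ustar))) = z + θ • w := by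
      rw [hz, hw]
      simp only [map_add, map_smul, map_sub, smul_sub]
      abel
    rw [h2] at h1
    have h3 : ‖z + θ • w‖ ^ 2 = ‖z‖ ^ 2 + 2 * (θ * ⟪z, w⟫) + θ ^ 2 * ‖w‖ ^ 2 := by
      rw [@norm_add_sq_real, real_inner_smul_right, norm_smul,
        Real.norm_of_nonneg hθ0.le, mul_pow]
    have h4 : r ^ 2 ≤ ‖z + θ • w‖ ^ 2 := by
      have hnn := norm_nonneg (z + θ • w)
      nlinarith
    rw [h3, hzr] at h4
    nlinarith
  have hkey : ∀ u : H, ⟪z, S (ts - τ) (P u)⟫ = ⟪u, P (S (ts - τ) z)⟫ := by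
    intro u
    rw [real_inner_comm, hSsa (ts - τ) hσpos.le, real_inner_comm, ← hPsa,
      real_inner_comm]
  have hmax1 : ∀ u : H, ‖u‖ ≤ M →
      ⟪ustar, P (S (ts - τ) z)⟫ ≤ ⟪u, P (S (ts - τ) z)⟫ := by
    intro u hu
    have h0 := hmax0 u hu
    rw [inner_sub_right, hkey u, hkey ustar] at h0
    linarith
  have hPneg : P (S (ts - τ) (-z)) = -(P (S (ts - τ) z)) := by
    rw [map_neg, map_neg]
  have hmaxv : ∀ u : H, ‖u‖ ≤ M →
      ⟪u, P (S (ts - τ) (-z))⟫ ≤ ⟪ustar, P (S (ts - τ) (-z))⟫ := by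
    intro u hu
    rw [hPneg, inner_neg_right, inner_neg_right]
    linarith [hmax1 u hu]
  have hvne : P (S (ts - τ) (-z)) ≠ 0 := hUC (-z) (neg_ne_zero.mpr hzne) (ts - τ) hσpos
  exact ⟨-z, neg_ne_zero.mpr hzne, hmaxv, hvne,
    stmt_7_aux M hM ustar (P (S (ts - τ) (-z))) hustar hvne hmaxv⟩
end

section
/- (Remark 2.1: feedback characterization of the optimal control) Let M > 0 and τ ≥ 0 satisfy condition (★), write t* := t*(M,τ), let u* be the optimal control for (TP)^τ_M, and set y* := y^τ(t*; y₀, u*). Then P(S (t*−τ) y*) ≠ 0 and u* = −M · P(S (t*−τ) y*) / ‖P(S (t*−τ) y*)‖. -/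
open RealInnerProductSpace Filter

set_option maxHeartbeats 1000000 in
theorem stmt_8
    {H : Type*} [NormedAddCommGroup H] [InnerProductSpace ℝ H] [CompleteSpace H]
    (lam : ℝ) (hlam : 0 < lam)
    (S : ℝ → H →L[ℝ] H)
    (hS0 : S 0 = ContinuousLinearMap.id ℝ H)
    (hSadd : ∀ s t : ℝ, 0 ≤ s → 0 ≤ t → S (s + t) = (S s).comp (S t))
    (hSsa : ∀ t : ℝ, 0 ≤ t → ∀ x z : H, ⟪S t x, z⟫ = ⟪x, S t z⟫)
    (hScont : ∀ y : H, ContinuousOn (fun t => S t y) (Set.Ici (0 : ℝ)))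
    (hSdecay : ∀ t : ℝ, 0 ≤ t → ∀ y : H, ‖S t y‖ ≤ Real.exp (-(lam * t)) * ‖y‖)
    (P : H →L[ℝ] H)
    (hPsa : ∀ x z : H, ⟪P x, z⟫ = ⟪x, P z⟫)
    (hPnorm : ∀ u : H, ‖P u‖ ≤ ‖u‖)
    (y₀ : H) (r : ℝ) (hr : 0 < r)
    (tS : ℝ → ℝ → ℝ)
    (htS : ∀ M τ : ℝ, tS M τ =
      sInf {T : ℝ | τ ≤ T ∧ ∃ u : H, ‖u‖ ≤ M ∧ ‖S T y₀ + S (T - τ) (P u)‖ ≤ r})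
    (hUC : ∀ φ : H, φ ≠ 0 → ∀ t : ℝ, 0 < t → P (S t φ) ≠ 0)
    (M τ : ℝ) (hM : 0 < M) (hτ : 0 ≤ τ)
    (hstar : ∀ u : H, ‖u‖ ≤ M → r < ‖S τ y₀ + P u‖)
    (ustar : H) (hustar : ‖ustar‖ ≤ M)
    (hopt : ‖S (tS M τ) y₀ + S (tS M τ - τ) (P ustar)‖ ≤ r)
    (ystar : H) (hystar : ystar = S (tS M τ) y₀ + S (tS M τ - τ) (P ustar)) :
    P (S (tS M τ - τ) ystar) ≠ 0 ∧
    ustar = -((M / ‖P (S (tS M τ - τ) ystar)‖) • P (S (tS M τ - τ) ystar)) := by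
  set T := tS M τ with hTdef'
  set Ω : Set ℝ := {T : ℝ | τ ≤ T ∧ ∃ u : H, ‖u‖ ≤ M ∧ ‖S T y₀ + S (T - τ) (P u)‖ ≤ r}
    with hΩdef
  have hTdef : T = sInf Ω := htS M τ
  -- Ω is nonempty
  have hne : Ω.Nonempty := by
    have h2 : Tendsto (fun t : ℝ => lam * t) atTop atTop :=
      Tendsto.const_mul_atTop hlam tendsto_id
    have h3 : Tendsto (fun t : ℝ => -(lam * t)) atTop atBot :=
      tendsto_neg_atTop_atBot.comp h2
    have h4 : Tendsto (fun t : ℝ => Real.exp (-(lam * t)) * ‖y₀‖) atTop (nhds 0) := by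
      have := (Real.tendsto_exp_atBot.comp h3).mul_const ‖y₀‖
      simpa using this
    have h5 : ∀ᶠ t in atTop, Real.exp (-(lam * t)) * ‖y₀‖ < r :=
      h4.eventually (gt_mem_nhds hr)
    obtain ⟨T₁, h6, h7⟩ := (h5.and (eventually_ge_atTop τ)).exists
    refine ⟨T₁, h7, 0, by simpa using hM.le, ?_⟩
    have : ‖S T₁ y₀ + S (T₁ - τ) (P 0)‖ = ‖S T₁ y₀‖ := by simp
    rw [this]
    exact le_trans (hSdecay T₁ (le_trans hτ h7) y₀) h6.le
  have hbdd : BddBelow Ω := ⟨τ, fun x hx => hx.1⟩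
  have hτT : τ ≤ T := hTdef ▸ le_csInf hne (fun x hx => hx.1)
  have hT0 : (0:ℝ) ≤ T := le_trans hτ hτT
  -- τ < T
  have hτltT : τ < T := by
    rcases lt_or_eq_of_le hτT with h | h
    · exact h
    · exfalso
      have h1 : T - τ = 0 := by rw [← h]; ring
      rw [h1, hS0] at hopt
      simp only [ContinuousLinearMap.id_apply] at hopt
      rw [← h] at hopt
      exact absurd hopt (not_le.2 (hstar ustar hustar))
  have hTτ0 : (0:ℝ) ≤ T - τ := by linarith
  -- key: r is a lower bound at time T for every admissible control
  have key : ∀ u : H, ‖u‖ ≤ M → r ≤ ‖S T y₀ + S (T - τ) (P u)‖ := by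
    intro u hu
    have hgt : ∀ t ∈ Set.Ico τ T, r < ‖S t y₀ + S (t - τ) (P u)‖ := by
      intro t ht
      by_contra hcon
      push_neg at hcon
      have hmem : t ∈ Ω := ⟨ht.1, u, hu, hcon⟩
      have : T ≤ t := hTdef ▸ csInf_le hbdd hmem
      exact absurd ht.2 (not_lt.2 this)
    have h1 : ContinuousWithinAt (fun t => S t y₀) (Set.Ico τ T) T :=
      ((hScont y₀) T hT0).mono (fun x hx => le_trans hτ hx.1)
    have h2 : ContinuousWithinAt (fun t => S (t - τ) (P u)) (Set.Ico τ T) T := by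
      have hg : ContinuousWithinAt (fun s => S s (P u)) (Set.Ici (0:ℝ)) (T - τ) :=
        (hScont (P u)) (T - τ) hTτ0
      have hf : ContinuousWithinAt (fun t : ℝ => t - τ) (Set.Ico τ T) T :=
        (continuous_sub_right τ).continuousWithinAt
      exact ContinuousWithinAt.comp (g := fun s => S s (P u)) (f := fun t : ℝ => t - τ)
        hg hf (fun x hx => by simp only [Set.mem_Ici, sub_nonneg]; exact hx.1)
    have hcont : ContinuousWithinAt (fun t => ‖S t y₀ + S (t - τ) (P u)‖)
        (Set.Ico τ T) T := (h1.add h2).norm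
    have hNe : (nhdsWithin T (Set.Ico τ T)).NeBot := by
      apply mem_closure_iff_nhdsWithin_neBot.mp
      rw [closure_Ico (ne_of_lt hτltT)]
      exact ⟨hτltT.le, le_refl T⟩
    have htends : Tendsto (fun t => ‖S t y₀ + S (t - τ) (P u)‖)
        (nhdsWithin T (Set.Ico τ T)) (nhds ‖S T y₀ + S (T - τ) (P u)‖) := hcont
    exact ge_of_tendsto htends
      (eventually_nhdsWithin_of_forall (fun t ht => (hgt t ht).le))
  -- ‖ystar‖ = r
  have hyle : ‖ystar‖ ≤ r := hystar ▸ hopt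
  have hyge : r ≤ ‖ystar‖ := hystar ▸ key ustar hustar
  have hyr : ‖ystar‖ = r := le_antisymm hyle hyge
  have hyne : ystar ≠ 0 := by
    rw [← norm_ne_zero_iff, hyr]; exact hr.ne'
  set φ := P (S (T - τ) ystar) with hφdef
  have hφne : φ ≠ 0 := hUC ystar hyne (T - τ) (by linarith)
  have hφpos : (0:ℝ) < ‖φ‖ := norm_pos_iff.mpr hφne
  refine ⟨hφne, ?_⟩
  -- adjoint identity
  have hadj : ∀ v : H, ⟪ystar, S (T - τ) (P v)⟫ = ⟪φ, v⟫ := by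
    intro v
    calc ⟪ystar, S (T - τ) (P v)⟫ = ⟪S (T - τ) (P v), ystar⟫ := real_inner_comm _ _
      _ = ⟪P v, S (T - τ) ystar⟫ := hSsa _ hTτ0 _ _
      _ = ⟪v, φ⟫ := hPsa _ _
      _ = ⟪φ, v⟫ := real_inner_comm _ _
  -- variational inequality against the candidate control
  set u : H := -((M / ‖φ‖) • φ) with hudef
  have hun : ‖u‖ = M := by
    rw [hudef, norm_neg, norm_smul, Real.norm_eq_abs, abs_div, abs_of_pos hM,
      abs_of_pos hφpos, div_mul_cancel₀ _ hφpos.ne']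
  set w : H := S (T - τ) (P (u - ustar)) with hwdef
  have hvar : 0 ≤ ⟪ystar, w⟫ := by
    by_contra hcon
    push_neg at hcon
    set c : ℝ := ⟪ystar, w⟫
    set b : ℝ := ‖w‖ ^ 2 with hbdef
    have hb : 0 ≤ b := sq_nonneg _
    set lm : ℝ := min 1 ((-c) / (b + 1)) with hlm
    have hlmpos : 0 < lm := lt_min one_pos (div_pos (by linarith) (by linarith))
    have hlm1 : lm ≤ 1 := min_le_left _ _
    have hlm2 : lm * (b + 1) ≤ -c := by
      rw [← le_div_iff₀ (by linarith : (0:ℝ) < b + 1)]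
      exact min_le_right _ _
    -- the perturbed control is admissible
    have hul : ‖ustar + lm • (u - ustar)‖ ≤ M := by
      have : ustar + lm • (u - ustar) = (1 - lm) • ustar + lm • u := by
        module
      rw [this]
      calc ‖(1 - lm) • ustar + lm • u‖ ≤ ‖(1 - lm) • ustar‖ + ‖lm • u‖ := norm_add_le _ _
        _ = (1 - lm) * ‖ustar‖ + lm * ‖u‖ := by
            rw [norm_smul, norm_smul, Real.norm_eq_abs, Real.norm_eq_abs,
              abs_of_nonneg (by linarith), abs_of_pos hlmpos]
        _ ≤ (1 - lm) * M + lm * M := by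
            have h1 : (1 - lm) * ‖ustar‖ ≤ (1 - lm) * M :=
              mul_le_mul_of_nonneg_left hustar (by linarith)
            have h2 : lm * ‖u‖ ≤ lm * M := by rw [hun]
            linarith
        _ = M := by ring
    have hkey := key _ hul
    have hst : S T y₀ + S (T - τ) (P (ustar + lm • (u - ustar))) = ystar + lm • w := by
      rw [hystar, hwdef]
      rw [map_add, map_smul, map_add, map_smul]
      abel
    rw [hst] at hkey
    have hexp : ‖ystar + lm • w‖ ^ 2 = r ^ 2 + 2 * lm * c + lm ^ 2 * b := by
      rw [@norm_add_sq_real, real_inner_smul_right, norm_smul, Real.norm_eq_abs,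
        abs_of_pos hlmpos, hyr, mul_pow, hbdef]
      ring
    have hsq : r ^ 2 ≤ ‖ystar + lm • w‖ ^ 2 := pow_le_pow_left₀ hr.le hkey 2
    rw [hexp] at hsq
    have h1 : lm * (lm * (b + 1)) ≤ lm * (-c) :=
      mul_le_mul_of_nonneg_left hlm2 hlmpos.le
    have h2 : lm * c < 0 := mul_neg_of_pos_of_neg hlmpos hcon
    nlinarith [sq_nonneg lm]
  -- ⟪φ, ustar⟫ = -M * ‖φ‖
  have hwu : ⟪ystar, w⟫ = ⟪φ, u⟫ - ⟪φ, ustar⟫ := by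
    rw [hwdef, hadj, inner_sub_right]
  have hphiu : ⟪φ, u⟫ = -(M * ‖φ‖) := by
    rw [hudef, inner_neg_right, real_inner_smul_right, real_inner_self_eq_norm_sq]
    field_simp
  have hcs : -(M * ‖φ‖) ≤ ⟪φ, ustar⟫ := by
    have h1 := abs_real_inner_le_norm φ ustar
    have h2 : ‖φ‖ * ‖ustar‖ ≤ ‖φ‖ * M := mul_le_mul_of_nonneg_left hustar hφpos.le
    have h3 := neg_abs_le ⟪φ, ustar⟫
    nlinarith
  have heq : ⟪φ, ustar⟫ = -(M * ‖φ‖) := by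
    rw [hwu, hphiu] at hvar
    linarith
  -- equality case
  have hinner : ⟪ustar, u⟫ = M ^ 2 := by
    have h1 : ⟪ustar, φ⟫ = -(M * ‖φ‖) := by rw [real_inner_comm]; exact heq
    rw [hudef, inner_neg_right, real_inner_smul_right, h1]
    field_simp
  have hnorm0 : ‖ustar - u‖ ^ 2 ≤ 0 := by
    rw [@norm_sub_sq_real, hinner, hun]
    nlinarith [norm_nonneg ustar]
  have hz : ustar - u = 0 := by
    have h1 : ‖ustar - u‖ ^ 2 = 0 := le_antisymm hnorm0 (sq_nonneg _)
    have h2 : ‖ustar - u‖ = 0 := by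
      exact pow_eq_zero_iff (n := 2) (by norm_num) |>.mp h1
    exact norm_eq_zero.mp h2
  exact sub_eq_zero.mp hz
end

section
/- (Lower semicontinuity of the minimal time in the impulse instant) Let M > 0 and τ ≥ 0, and let (τ_n) be a sequence of nonnegative reals with τ_n → τ. Then t*(M,τ) ≤ liminf_{n→∞} t*(M,τ_n). -/
/-!
Take near-optimal times `T n` for the instants `τseq n`, with controls `U n`, and pass to an
ultrafilter along which `T n` tends to the liminf `L` of the minimal times. The controls lie in
the closed ball of radius `M`, so along the ultrafilter they converge weakly to some `u` in that
ball (Riesz representation of the limit functional `w ↦ lim ⟪U n, w⟫`). Self-adjointness and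
strong continuity of `S` turn this into weak convergence of the final states to
`S L y₀ + S (L - τ) (P u)`, and the norm is weakly lower semicontinuous, so `L` is an admissible
time for `τ`. The decay of `S` makes every zero-control trajectory eventually admissible, which
bounds the minimal times and gives the liminf its meaning.
-/

open RealInnerProductSpace Filter Topology

section WeakLimits

variable {H : Type*} [NormedAddCommGroup H] [InnerProductSpace ℝ H] {ι : Type*}

theorem Ultrafilter.exists_tendsto_inner_of_norm_le [CompleteSpace H] (𝒰 : Ultrafilter ι)
    {U : ι → H} {M : ℝ} (hU : ∀ i, ‖U i‖ ≤ M) :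
    ∃ u : H, ‖u‖ ≤ M ∧ ∀ w, Tendsto (fun i => ⟪U i, w⟫) 𝒰 (𝓝 ⟪u, w⟫) := by
  have hlim : ∀ w : H, ∃ l ∈ Metric.closedBall (0 : ℝ) (M * ‖w‖),
      Tendsto (fun i => ⟪U i, w⟫) 𝒰 (𝓝 l) := by
    intro w
    refine (isCompact_closedBall _ _).ultrafilter_le_nhds (𝒰.map _) ?_
    rw [Ultrafilter.coe_map, le_principal_iff, Filter.mem_map]
    refine univ_mem' fun i => ?_
    rw [Set.mem_preimage, mem_closedBall_zero_iff, Real.norm_eq_abs]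
    exact (abs_real_inner_le_norm _ _).trans (mul_le_mul_of_nonneg_right (hU i) (norm_nonneg w))
  choose l hl_le hl using hlim
  have hM : 0 ≤ M := (norm_nonneg _).trans (hU (nonempty_of_neBot (𝒰 : Filter ι)).some)
  let φ : H →L[ℝ] ℝ := LinearMap.mkContinuous
    { toFun := l
      map_add' := fun w₁ w₂ => tendsto_nhds_unique (hl _) <| by
        simpa only [inner_add_right] using (hl w₁).add (hl w₂)
      map_smul' := fun c w => tendsto_nhds_unique (hl _) <| by
        simpa only [inner_smul_right, smul_eq_mul, RingHom.id_apply] using (hl w).const_mul c }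
    M (fun w => mem_closedBall_zero_iff.1 (hl_le w))
  refine ⟨(InnerProductSpace.toDual ℝ H).symm φ, ?_, fun w => ?_⟩
  · rw [LinearIsometryEquiv.norm_map]
    exact LinearMap.mkContinuous_norm_le _ hM _
  · rw [InnerProductSpace.toDual_symm_apply]
    exact hl w

theorem tendsto_inner_of_weak_of_tendsto_s10 {l : Filter ι} {U : ι → H} {u : H} {M : ℝ}
    (hU : ∀ i, ‖U i‖ ≤ M) (hweak : ∀ w, Tendsto (fun i => ⟪U i, w⟫) l (𝓝 ⟪u, w⟫))
    {x : ι → H} {x₀ : H} (hx : Tendsto x l (𝓝 x₀)) :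
    Tendsto (fun i => ⟪U i, x i⟫) l (𝓝 ⟪u, x₀⟫) := by
  have hsmall : Tendsto (fun i => ⟪U i, x i - x₀⟫) l (𝓝 0) := by
    refine squeeze_zero_norm (fun i => ?_) <| by
      simpa using (tendsto_sub_nhds_zero_iff.2 hx).norm.const_mul M
    rw [Real.norm_eq_abs]
    exact (abs_real_inner_le_norm _ _).trans (mul_le_mul_of_nonneg_right (hU i) (norm_nonneg _))
  simpa only [inner_sub_right, sub_add_cancel, zero_add] using hsmall.add (hweak x₀)

theorem norm_le_of_tendsto_inner {l : Filter ι} [l.NeBot] {v : ι → H} {v₀ : H} {r : ℝ}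
    (hweak : ∀ w, Tendsto (fun i => ⟪v i, w⟫) l (𝓝 ⟪v₀, w⟫)) (hr : ∀ i, ‖v i‖ ≤ r) :
    ‖v₀‖ ≤ r := by
  have hr0 : 0 ≤ r := (norm_nonneg _).trans (hr (nonempty_of_neBot l).some)
  have hsq : ‖v₀‖ * ‖v₀‖ ≤ r * ‖v₀‖ := by
    rw [← real_inner_self_eq_norm_mul_norm]
    exact le_of_tendsto (hweak v₀) (Eventually.of_forall fun i =>
      (real_inner_le_norm _ _).trans (mul_le_mul_of_nonneg_right (hr i) (norm_nonneg _)))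
  rcases (norm_nonneg v₀).eq_or_lt with h0 | h0
  · exact h0 ▸ hr0
  · exact le_of_mul_le_mul_right hsq h0

end WeakLimits

section ImpulseControl

variable {H : Type*} [NormedAddCommGroup H] [InnerProductSpace ℝ H]
  (S : ℝ → H →L[ℝ] H) (P : H →L[ℝ] H) (y₀ : H) (r M : ℝ)

def admissibleTimes (σ : ℝ) : Set ℝ :=
  {T : ℝ | σ ≤ T ∧ ∃ u : H, ‖u‖ ≤ M ∧ ‖S T y₀ + S (T - σ) (P u)‖ ≤ r}

variable {S P y₀ r M}

theorem exists_forall_ge_mem_admissibleTimes {lam : ℝ} (hlam : 0 < lam)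
    (hSdecay : ∀ t : ℝ, 0 ≤ t → ∀ y : H, ‖S t y‖ ≤ Real.exp (-(lam * t)) * ‖y‖)
    (hr : 0 < r) (hM : 0 ≤ M) :
    ∃ T₁, ∀ σ T, σ ≤ T → T₁ ≤ T → T ∈ admissibleTimes S P y₀ r M σ := by
  have hfree : Tendsto (fun T => Real.exp (-(lam * T)) * ‖y₀‖) atTop (𝓝 0) := by
    simpa using (Real.tendsto_exp_neg_atTop_nhds_zero.comp
      (tendsto_id.const_mul_atTop hlam)).mul_const ‖y₀‖
  obtain ⟨T₁, hT₁⟩ := eventually_atTop.1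
    ((hfree.eventually (eventually_le_nhds hr)).and (eventually_ge_atTop 0))
  refine ⟨T₁, fun σ T hσT hT => ⟨hσT, 0, by simpa using hM, ?_⟩⟩
  rw [map_zero, map_zero, add_zero]
  exact (hSdecay T (hT₁ T hT).2 y₀).trans (hT₁ T hT).1

theorem tendsto_apply_of_tendsto
    (hScont : ∀ y : H, ContinuousOn (fun t => S t y) (Set.Ici (0 : ℝ)))
    {ι : Type*} {l : Filter ι} [l.NeBot] {t : ι → ℝ} {t₀ : ℝ} (ht0 : ∀ i, 0 ≤ t i)
    (ht : Tendsto t l (𝓝 t₀)) (y : H) :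
    Tendsto (fun i => S (t i) y) l (𝓝 (S t₀ y)) :=
  ((hScont y) t₀ (ge_of_tendsto' ht ht0)).tendsto.comp
    (tendsto_nhdsWithin_iff.2 ⟨ht, Eventually.of_forall ht0⟩)

theorem mem_admissibleTimes_of_tendsto [CompleteSpace H]
    (hSsa : ∀ t : ℝ, 0 ≤ t → ∀ x z : H, ⟪S t x, z⟫ = ⟪x, S t z⟫)
    (hScont : ∀ y : H, ContinuousOn (fun t => S t y) (Set.Ici (0 : ℝ)))
    {ι : Type*} (𝒰 : Ultrafilter ι) {σ T : ι → ℝ} {σ₀ T₀ : ℝ} (hσ0 : ∀ i, 0 ≤ σ i)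
    (hσ : Tendsto σ 𝒰 (𝓝 σ₀)) (hT : Tendsto T 𝒰 (𝓝 T₀))
    (hmem : ∀ i, T i ∈ admissibleTimes S P y₀ r M (σ i)) :
    T₀ ∈ admissibleTimes S P y₀ r M σ₀ := by
  choose hσT U hUM hUr using hmem
  obtain ⟨u, huM, hweak⟩ := 𝒰.exists_tendsto_inner_of_norm_le hUM
  have hlag0 : ∀ i, 0 ≤ T i - σ i := fun i => sub_nonneg.2 (hσT i)
  have hlag0' : 0 ≤ T₀ - σ₀ := ge_of_tendsto' (hT.sub hσ) hlag0
  have hadj : ∀ t, 0 ≤ t → ∀ v w, ⟪S t (P v), w⟫ = ⟪v, P.adjoint (S t w)⟫ := by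
    intro t ht v w
    rw [hSsa t ht, ContinuousLinearMap.adjoint_inner_right]
  refine ⟨le_of_tendsto_of_tendsto' hσ hT hσT, u, huM,
    norm_le_of_tendsto_inner (l := 𝒰) (fun w => ?_) hUr⟩
  have hfree : Tendsto (fun i => S (T i) y₀) 𝒰 (𝓝 (S T₀ y₀)) :=
    tendsto_apply_of_tendsto hScont (fun i => (hσ0 i).trans (hσT i)) hT y₀
  have hlag : Tendsto (fun i => P.adjoint (S (T i - σ i) w)) 𝒰 (𝓝 (P.adjoint (S (T₀ - σ₀) w))) :=
    (P.adjoint.continuous.tendsto _).comp (tendsto_apply_of_tendsto hScont hlag0 (hT.sub hσ) w)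
  simp only [inner_add_left, hadj _ (hlag0 _), hadj _ hlag0']
  exact (hfree.inner tendsto_const_nhds).add (tendsto_inner_of_weak_of_tendsto_s10 hUM hweak hlag)

end ImpulseControl

theorem stmt_10_general
    {H : Type*} [NormedAddCommGroup H] [InnerProductSpace ℝ H] [CompleteSpace H]
    (lam : ℝ) (hlam : 0 < lam)
    (S : ℝ → H →L[ℝ] H)
    (hSsa : ∀ t : ℝ, 0 ≤ t → ∀ x z : H, ⟪S t x, z⟫ = ⟪x, S t z⟫)
    (hScont : ∀ y : H, ContinuousOn (fun t => S t y) (Set.Ici (0 : ℝ)))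
    (hSdecay : ∀ t : ℝ, 0 ≤ t → ∀ y : H, ‖S t y‖ ≤ Real.exp (-(lam * t)) * ‖y‖)
    (P : H →L[ℝ] H)
    (y₀ : H) (r : ℝ) (hr : 0 < r)
    (tS : ℝ → ℝ → ℝ)
    (htS : ∀ M τ : ℝ, tS M τ =
      sInf {T : ℝ | τ ≤ T ∧ ∃ u : H, ‖u‖ ≤ M ∧ ‖S T y₀ + S (T - τ) (P u)‖ ≤ r})
    (M τ : ℝ) (hM : 0 < M)
    (τseq : ℕ → ℝ) (hτn : ∀ n, 0 ≤ τseq n)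
    (hconv : Tendsto τseq atTop (nhds τ)) :
    tS M τ ≤ atTop.liminf (fun n => tS M (τseq n)) := by
  set A := admissibleTimes S P y₀ r M
  have htA : ∀ σ, tS M σ = sInf (A σ) := htS M
  simp only [htA]
  obtain ⟨T₁, hT₁⟩ := exists_forall_ge_mem_admissibleTimes (y₀ := y₀) (P := P) hlam hSdecay hr hM.le
  have hne : ∀ σ, (A σ).Nonempty := fun σ => ⟨_, hT₁ σ _ (le_max_left σ T₁) (le_max_right σ T₁)⟩
  have hbdd : ∀ σ, BddBelow (A σ) := fun σ => ⟨σ, fun _ hT => hT.1⟩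
  obtain ⟨B, hB⟩ : ∃ B, ∀ n, τseq n ≤ B := hconv.bddAbove_range.imp fun _ hB n => hB ⟨n, rfl⟩
  have hlow : ∀ n, 0 ≤ sInf (A (τseq n)) := fun n =>
    le_csInf (hne _) fun _ hT => (hτn n).trans hT.1
  have hup : ∀ n, sInf (A (τseq n)) ≤ max B T₁ := fun n =>
    csInf_le (hbdd _) (hT₁ _ _ ((hB n).trans (le_max_left _ _)) (le_max_right _ _))
  obtain ⟨𝒰, h𝒰, hL⟩ := mapClusterPt_iff_ultrafilter.1 <|
    MapClusterPt.liminf (f := atTop) (isBoundedUnder_of ⟨_, hup⟩).isCoboundedUnder_ge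
      (isBoundedUnder_of ⟨_, hlow⟩)
  choose T hTA hTlt using fun n : ℕ =>
    Real.lt_sInf_add_pos (hne (τseq n)) (Nat.one_div_pos_of_nat (α := ℝ) (n := n))
  have hT : Tendsto T 𝒰 (𝓝 (atTop.liminf fun n => sInf (A (τseq n)))) :=
    tendsto_of_tendsto_of_tendsto_of_le_of_le hL
      (by simpa using hL.add (tendsto_one_div_add_atTop_nhds_zero_nat.mono_left h𝒰))
      (fun n => csInf_le (hbdd _) (hTA n)) (fun n => (hTlt n).le)
  exact csInf_le (hbdd τ)
    (mem_admissibleTimes_of_tendsto hSsa hScont 𝒰 hτn (hconv.mono_left h𝒰) hT hTA)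

theorem stmt_10
    {H : Type*} [NormedAddCommGroup H] [InnerProductSpace ℝ H] [CompleteSpace H]
    (lam : ℝ) (hlam : 0 < lam)
    (S : ℝ → H →L[ℝ] H)
    (hS0 : S 0 = ContinuousLinearMap.id ℝ H)
    (hSadd : ∀ s t : ℝ, 0 ≤ s → 0 ≤ t → S (s + t) = (S s).comp (S t))
    (hSsa : ∀ t : ℝ, 0 ≤ t → ∀ x z : H, ⟪S t x, z⟫ = ⟪x, S t z⟫)
    (hScont : ∀ y : H, ContinuousOn (fun t => S t y) (Set.Ici (0 : ℝ)))
    (hSdecay : ∀ t : ℝ, 0 ≤ t → ∀ y : H, ‖S t y‖ ≤ Real.exp (-(lam * t)) * ‖y‖)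
    (P : H →L[ℝ] H)
    (hPsa : ∀ x z : H, ⟪P x, z⟫ = ⟪x, P z⟫)
    (hPnorm : ∀ u : H, ‖P u‖ ≤ ‖u‖)
    (y₀ : H) (r : ℝ) (hr : 0 < r)
    (tS : ℝ → ℝ → ℝ)
    (htS : ∀ M τ : ℝ, tS M τ =
      sInf {T : ℝ | τ ≤ T ∧ ∃ u : H, ‖u‖ ≤ M ∧ ‖S T y₀ + S (T - τ) (P u)‖ ≤ r})
    (M τ : ℝ) (hM : 0 < M) (hτ : 0 ≤ τ)
    (τseq : ℕ → ℝ) (hτn : ∀ n, 0 ≤ τseq n)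
    (hconv : Tendsto τseq atTop (nhds τ)) :
    tS M τ ≤ atTop.liminf (fun n => tS M (τseq n)) :=
  stmt_10_general lam hlam S hSsa hScont hSdecay P y₀ r hr tS htS M τ hM τseq hτn hconv
end

section
/- (Upper semicontinuity of the minimal time in the impulse instant) Let M > 0 and τ ≥ 0 satisfy condition (★), and let (τ_n) be a sequence of nonnegative reals with τ_n → τ. Then limsup_{n→∞} t*(M,τ_n) ≤ t*(M,τ). -/
open RealInnerProductSpace Filter

theorem stmt_11
    {H : Type*} [NormedAddCommGroup H] [InnerProductSpace ℝ H] [CompleteSpace H]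
    (lam : ℝ) (hlam : 0 < lam)
    (S : ℝ → H →L[ℝ] H)
    (hS0 : S 0 = ContinuousLinearMap.id ℝ H)
    (hSadd : ∀ s t : ℝ, 0 ≤ s → 0 ≤ t → S (s + t) = (S s).comp (S t))
    (hSsa : ∀ t : ℝ, 0 ≤ t → ∀ x z : H, ⟪S t x, z⟫ = ⟪x, S t z⟫)
    (hScont : ∀ y : H, ContinuousOn (fun t => S t y) (Set.Ici (0 : ℝ)))
    (hSdecay : ∀ t : ℝ, 0 ≤ t → ∀ y : H, ‖S t y‖ ≤ Real.exp (-(lam * t)) * ‖y‖)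
    (P : H →L[ℝ] H)
    (hPsa : ∀ x z : H, ⟪P x, z⟫ = ⟪x, P z⟫)
    (hPnorm : ∀ u : H, ‖P u‖ ≤ ‖u‖)
    (y₀ : H) (r : ℝ) (hr : 0 < r)
    (tS : ℝ → ℝ → ℝ)
    (htS : ∀ M τ : ℝ, tS M τ =
      sInf {T : ℝ | τ ≤ T ∧ ∃ u : H, ‖u‖ ≤ M ∧ ‖S T y₀ + S (T - τ) (P u)‖ ≤ r})
    (M τ : ℝ) (hM : 0 < M) (hτ : 0 ≤ τ)
    (hstar : ∀ u : H, ‖u‖ ≤ M → r < ‖S τ y₀ + P u‖)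
    (τseq : ℕ → ℝ) (hτn : ∀ n, 0 ≤ τseq n)
    (hconv : Tendsto τseq atTop (nhds τ)) :
    atTop.limsup (fun n => tS M (τseq n)) ≤ tS M τ := by
  -- nonnegativity of tS
  have htS_nonneg : ∀ σ : ℝ, 0 ≤ σ → 0 ≤ tS M σ := by
    intro σ hσ
    rw [htS]
    rcases Set.eq_empty_or_nonempty
        {T : ℝ | σ ≤ T ∧ ∃ u : H, ‖u‖ ≤ M ∧ ‖S T y₀ + S (T - σ) (P u)‖ ≤ r} with h | h
    · rw [h, Real.sInf_empty]
    · exact le_csInf h (fun T hT => hσ.trans hT.1)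
  have hcobdd : IsCoboundedUnder (· ≤ ·) atTop (fun n => tS M (τseq n)) :=
    isCoboundedUnder_le_of_le atTop (x := 0) (fun n => htS_nonneg _ (hτn n))
  -- nonemptiness of the admissible set at τ
  have hexp : Tendsto (fun t : ℝ => Real.exp (-(lam * t)) * ‖y₀‖) atTop (nhds 0) := by
    have h1 : Tendsto (fun t : ℝ => -(lam * t)) atTop atBot := by
      exact tendsto_neg_atBot_iff.mpr (tendsto_id.const_mul_atTop hlam)
    have h2 : Tendsto (fun t : ℝ => Real.exp (-(lam * t))) atTop (nhds 0) :=
      Real.tendsto_exp_atBot.comp h1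
    simpa using h2.mul_const ‖y₀‖
  obtain ⟨T₀, hT₀⟩ : ∃ T₀ : ℝ, τ ≤ T₀ ∧ 0 ≤ T₀ ∧ Real.exp (-(lam * T₀)) * ‖y₀‖ ≤ r := by
    have := (hexp.eventually_lt_const hr).and ((eventually_ge_atTop τ).and (eventually_ge_atTop 0))
    rcases this.exists with ⟨T₀, h1, h2, h3⟩
    exact ⟨T₀, h2, h3, h1.le⟩
  have hne : Set.Nonempty
      {T : ℝ | τ ≤ T ∧ ∃ u : H, ‖u‖ ≤ M ∧ ‖S T y₀ + S (T - τ) (P u)‖ ≤ r} := by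
    refine ⟨T₀, hT₀.1, 0, by simp [hM.le], ?_⟩
    simpa using (hSdecay T₀ hT₀.2.1 y₀).trans hT₀.2.2
  -- main argument: for every ε > 0, limsup ≤ tS M τ + ε
  have key : ∀ ε : ℝ, 0 < ε → atTop.limsup (fun n => tS M (τseq n)) ≤ tS M τ + ε := by
    intro ε hε
    obtain ⟨T, ⟨hTτ, u, hu, hur⟩, hTlt⟩ :
        ∃ T ∈ {T : ℝ | τ ≤ T ∧ ∃ u : H, ‖u‖ ≤ M ∧ ‖S T y₀ + S (T - τ) (P u)‖ ≤ r},
          T < sInf {T : ℝ | τ ≤ T ∧ ∃ u : H, ‖u‖ ≤ M ∧ ‖S T y₀ + S (T - τ) (P u)‖ ≤ r}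
            + ε / 2 :=
      Real.lt_sInf_add_pos hne (half_pos hε)
    set T' : ℝ := T + ε / 2 with hT'def
    have hτT' : τ < T' := lt_of_le_of_lt hTτ (by simp [hT'def]; linarith)
    have hT'lt : T' < tS M τ + ε := by rw [htS]; simp only [hT'def]; linarith
    -- strict admissibility at T' for τ
    have hstrict : ‖S T' y₀ + S (T' - τ) (P u)‖ < r := by
      have e1 : S T' y₀ = S (ε / 2) (S T y₀) := by
        have : T' = ε / 2 + T := by ring
        rw [this, hSadd (ε / 2) T (half_pos hε).le (hτ.trans hTτ)]; rfl
      have e2 : S (T' - τ) (P u) = S (ε / 2) (S (T - τ) (P u)) := by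
        have : T' - τ = ε / 2 + (T - τ) := by ring
        rw [this, hSadd (ε / 2) (T - τ) (half_pos hε).le (by linarith)]; rfl
      rw [e1, e2, ← map_add]
      calc ‖S (ε / 2) (S T y₀ + S (T - τ) (P u))‖
          ≤ Real.exp (-(lam * (ε / 2))) * ‖S T y₀ + S (T - τ) (P u)‖ :=
            hSdecay _ (half_pos hε).le _
        _ ≤ Real.exp (-(lam * (ε / 2))) * r := by
            exact mul_le_mul_of_nonneg_left hur (Real.exp_pos _).le
        _ < 1 * r := by
            apply mul_lt_mul_of_pos_right _ hr
            rw [Real.exp_lt_one_iff]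
            nlinarith
        _ = r := one_mul r
    -- continuity in the impulse instant
    have hcontAt : ContinuousAt (fun t => S t (P u)) (T' - τ) :=
      (hScont (P u)).continuousAt (Ici_mem_nhds (by linarith))
    have h2 : Tendsto (fun n => S (T' - τseq n) (P u)) atTop (nhds (S (T' - τ) (P u))) :=
      hcontAt.tendsto.comp (tendsto_const_nhds.sub hconv)
    have h3 : Tendsto (fun n => ‖S T' y₀ + S (T' - τseq n) (P u)‖) atTop
        (nhds ‖S T' y₀ + S (T' - τ) (P u)‖) := (tendsto_const_nhds.add h2).norm
    have h4 : ∀ᶠ n in atTop, ‖S T' y₀ + S (T' - τseq n) (P u)‖ ≤ r :=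
      (h3.eventually_lt_const hstrict).mono fun n h => h.le
    have h5 : ∀ᶠ n in atTop, τseq n ≤ T' :=
      (hconv.eventually_lt_const hτT').mono fun n h => h.le
    have h6 : ∀ᶠ n in atTop, tS M (τseq n) ≤ tS M τ + ε := by
      filter_upwards [h4, h5] with n hn1 hn2
      have : tS M (τseq n) ≤ T' := by
        rw [htS]
        exact csInf_le ⟨τseq n, fun x hx => hx.1⟩ ⟨hn2, u, hu, hn1⟩
      linarith
    exact limsup_le_of_le hcobdd h6
  by_contra hcon
  push_neg at hcon
  have := key ((atTop.limsup (fun n => tS M (τseq n)) - tS M τ) / 2) (by linarith)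
  linarith
end

section
/- (Proposition 3.1) Let M > 0 and τ ≥ 0 satisfy condition (★). Then the function τ̃ ↦ t*(M, τ̃), defined on [0,∞), is continuous at τ: for every sequence (τ_n) of nonnegative reals with τ_n → τ, one has t*(M,τ_n) → t*(M,τ). -/
open RealInnerProductSpace Filter

theorem stmt_12
    {H : Type*} [NormedAddCommGroup H] [InnerProductSpace ℝ H] [CompleteSpace H]
    (lam : ℝ) (hlam : 0 < lam)
    (S : ℝ → H →L[ℝ] H)
    (hS0 : S 0 = ContinuousLinearMap.id ℝ H)
    (hSadd : ∀ s t : ℝ, 0 ≤ s → 0 ≤ t → S (s + t) = (S s).comp (S t))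
    (hSsa : ∀ t : ℝ, 0 ≤ t → ∀ x z : H, ⟪S t x, z⟫ = ⟪x, S t z⟫)
    (hScont : ∀ y : H, ContinuousOn (fun t => S t y) (Set.Ici (0 : ℝ)))
    (hSdecay : ∀ t : ℝ, 0 ≤ t → ∀ y : H, ‖S t y‖ ≤ Real.exp (-(lam * t)) * ‖y‖)
    (P : H →L[ℝ] H)
    (hPsa : ∀ x z : H, ⟪P x, z⟫ = ⟪x, P z⟫)
    (hPnorm : ∀ u : H, ‖P u‖ ≤ ‖u‖)
    (y₀ : H) (r : ℝ) (hr : 0 < r)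
    (tS : ℝ → ℝ → ℝ)
    (htS : ∀ M τ : ℝ, tS M τ =
      sInf {T : ℝ | τ ≤ T ∧ ∃ u : H, ‖u‖ ≤ M ∧ ‖S T y₀ + S (T - τ) (P u)‖ ≤ r})
    (M τ : ℝ) (hM : 0 < M) (hτ : 0 ≤ τ)
    (hstar : ∀ u : H, ‖u‖ ≤ M → r < ‖S τ y₀ + P u‖)
    (τseq : ℕ → ℝ) (hτn : ∀ n, 0 ≤ τseq n)
    (hconv : Tendsto τseq atTop (nhds τ)) :
    Tendsto (fun n => tS M (τseq n)) atTop (nhds (tS M τ)) := by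
  classical
  -- The admissible set
  set Adm : ℝ → Set ℝ := fun σ =>
    {T : ℝ | σ ≤ T ∧ ∃ u : H, ‖u‖ ≤ M ∧ ‖S T y₀ + S (T - σ) (P u)‖ ≤ r} with hAdmdef
  have htS' : ∀ σ : ℝ, tS M σ = sInf (Adm σ) := fun σ => htS M σ
  have hbdd : ∀ σ : ℝ, BddBelow (Adm σ) := fun σ => ⟨σ, fun T hT => hT.1⟩
  -- a time after which the free solution is inside the ball
  obtain ⟨Tr, hTr0, hTrle⟩ : ∃ Tr : ℝ, 0 ≤ Tr ∧ Real.exp (-(lam * Tr)) * ‖y₀‖ ≤ r := by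
    have hA : Tendsto (fun t : ℝ => lam * t) atTop atTop :=
      Tendsto.const_mul_atTop hlam tendsto_id
    have hB : Tendsto (fun t : ℝ => Real.exp (-(lam * t))) atTop (nhds 0) := by
      simpa [Function.comp_def] using
        Real.tendsto_exp_atBot.comp (tendsto_neg_atTop_atBot.comp hA)
    have h1 := hB.mul_const ‖y₀‖
    rw [zero_mul] at h1
    have h2 : ∀ᶠ t : ℝ in atTop, Real.exp (-(lam * t)) * ‖y₀‖ ≤ r :=
      h1.eventually (eventually_le_nhds hr)
    obtain ⟨t, ht1, ht2⟩ := (h2.and (eventually_ge_atTop (0 : ℝ))).exists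
    exact ⟨t, ht2, ht1⟩
  -- nonemptiness of the admissible set
  have hmem : ∀ σ : ℝ, 0 ≤ σ → max σ Tr ∈ Adm σ := by
    intro σ hσ
    refine ⟨le_max_left _ _, 0, by simpa using hM.le, ?_⟩
    have h0 : S (max σ Tr - σ) (P 0) = 0 := by simp
    rw [h0, add_zero]
    calc ‖S (max σ Tr) y₀‖ ≤ Real.exp (-(lam * max σ Tr)) * ‖y₀‖ :=
          hSdecay _ (le_trans hTr0 (le_max_right _ _)) y₀
      _ ≤ Real.exp (-(lam * Tr)) * ‖y₀‖ := by
          apply mul_le_mul_of_nonneg_right _ (norm_nonneg y₀)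
          apply Real.exp_le_exp.2
          nlinarith [le_max_right σ Tr]
      _ ≤ r := hTrle
  have hne : ∀ σ : ℝ, 0 ≤ σ → (Adm σ).Nonempty := fun σ hσ => ⟨_, hmem σ hσ⟩
  -- the key perturbation lemma
  have key : ∀ σ₁ σ₂ : ℝ, 0 ≤ σ₁ → 0 ≤ σ₂ → ∀ δ : ℝ, 0 < δ → ∀ T, T ∈ Adm σ₁ →
      ‖S (T - σ₁ + σ₂) y₀ - S T y₀‖ + r ≤ Real.exp (lam * δ) * r →
      tS M σ₂ ≤ T - σ₁ + σ₂ + δ := by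
    intro σ₁ σ₂ h1 h2 δ hδ T hT hnear
    obtain ⟨hσT, u, hu, hur⟩ := hT
    rw [htS']
    apply csInf_le (hbdd σ₂)
    refine ⟨by linarith, u, hu, ?_⟩
    have e1 : S (T - σ₁ + σ₂ + δ) y₀ = S δ (S (T - σ₁ + σ₂) y₀) := by
      have h := hSadd δ (T - σ₁ + σ₂) hδ.le (by linarith)
      rw [show T - σ₁ + σ₂ + δ = δ + (T - σ₁ + σ₂) by ring, h]
      rfl
    have e2 : S (T - σ₁ + σ₂ + δ - σ₂) (P u) = S δ (S (T - σ₁) (P u)) := by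
      have h := hSadd δ (T - σ₁) hδ.le (by linarith)
      rw [show T - σ₁ + σ₂ + δ - σ₂ = δ + (T - σ₁) by ring, h]
      rfl
    rw [e1, e2, ← map_add]
    have esplit : S (T - σ₁ + σ₂) y₀ + S (T - σ₁) (P u)
        = (S (T - σ₁ + σ₂) y₀ - S T y₀) + (S T y₀ + S (T - σ₁) (P u)) := by abel
    calc ‖S δ (S (T - σ₁ + σ₂) y₀ + S (T - σ₁) (P u))‖
        ≤ Real.exp (-(lam * δ)) * ‖S (T - σ₁ + σ₂) y₀ + S (T - σ₁) (P u)‖ :=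
          hSdecay δ hδ.le _
      _ ≤ Real.exp (-(lam * δ)) *
            (‖S (T - σ₁ + σ₂) y₀ - S T y₀‖ + ‖S T y₀ + S (T - σ₁) (P u)‖) := by
          apply mul_le_mul_of_nonneg_left _ (Real.exp_nonneg _)
          rw [esplit]
          exact norm_add_le _ _
      _ ≤ Real.exp (-(lam * δ)) * (Real.exp (lam * δ) * r) := by
          apply mul_le_mul_of_nonneg_left _ (Real.exp_nonneg _)
          linarith
      _ = r := by
          rw [← mul_assoc, ← Real.exp_add, neg_add_cancel, Real.exp_zero, one_mul]
  -- a common upper bound K for all the relevant times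
  obtain ⟨K, hKτ, hKTr⟩ : ∃ K : ℝ, τ + 1 ≤ K - 2 ∧ Tr ≤ K - 2 :=
    ⟨max (τ + 1) Tr + 2, by linarith [le_max_left (τ + 1) Tr],
      by linarith [le_max_right (τ + 1) Tr]⟩
  have htB : tS M τ ≤ K - 2 := by
    rw [htS']
    refine le_trans (csInf_le (hbdd τ) (hmem τ hτ)) ?_
    exact max_le (by linarith) hKTr
  -- uniform continuity of the trajectory on [0, K]
  have hUC : ∀ ε : ℝ, 0 < ε → ∃ δ : ℝ, 0 < δ ∧ ∀ s ∈ Set.Icc (0:ℝ) K, ∀ t ∈ Set.Icc (0:ℝ) K,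
      |s - t| < δ → ‖S s y₀ - S t y₀‖ < ε := by
    intro ε hε
    have huc : UniformContinuousOn (fun t => S t y₀) (Set.Icc (0:ℝ) K) :=
      isCompact_Icc.uniformContinuousOn_of_continuous
        ((hScont y₀).mono Set.Icc_subset_Ici_self)
    rw [Metric.uniformContinuousOn_iff] at huc
    obtain ⟨δ, hδ, hδ'⟩ := huc ε hε
    refine ⟨δ, hδ, fun s hs t ht hst => ?_⟩
    have := hδ' s hs t ht (by rwa [Real.dist_eq])
    rwa [dist_eq_norm] at this
  -- main estimate
  rw [Metric.tendsto_atTop]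
  intro ε hε
  obtain ⟨δ₀, hδ₀, hδ₀ε, hδ₀1⟩ : ∃ δ₀ : ℝ, 0 < δ₀ ∧ δ₀ ≤ ε / 4 ∧ δ₀ ≤ 1 :=
    ⟨min (ε / 4) 1, lt_min (by linarith) one_pos, min_le_left _ _, min_le_right _ _⟩
  have hexp1 : 1 < Real.exp (lam * δ₀) := by
    rw [← Real.exp_zero]
    exact Real.exp_lt_exp.2 (by positivity)
  obtain ⟨c, hc, hcle⟩ : ∃ c : ℝ, 0 < c ∧ c + r ≤ Real.exp (lam * δ₀) * r :=
    ⟨(Real.exp (lam * δ₀) - 1) * r, mul_pos (by linarith) hr, by nlinarith⟩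
  obtain ⟨δ₁, hδ₁, hδ₁'⟩ := hUC c hc
  -- choose the reference admissible time for τ
  obtain ⟨Tu, hTu, hTult⟩ : ∃ Tu ∈ Adm τ, Tu < sInf (Adm τ) + δ₀ :=
    Real.lt_sInf_add_pos (hne τ hτ) hδ₀
  have hTult' : Tu < tS M τ + δ₀ := by rw [htS' τ]; exact hTult
  have hTuB : Tu ≤ K - 1 := by linarith
  have hTu0 : 0 ≤ Tu := le_trans hτ hTu.1
  have hτTu : τ ≤ Tu := hTu.1
  -- eventual closeness of τseq
  have hev : ∀ᶠ n in atTop, |τseq n - τ| < min δ₁ (min 1 (ε / 4)) := by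
    obtain ⟨N, hN⟩ := Metric.tendsto_atTop.mp hconv (min δ₁ (min 1 (ε / 4)))
      (lt_min hδ₁ (lt_min one_pos (by linarith)))
    filter_upwards [eventually_ge_atTop N] with n hn
    have := hN n hn
    rwa [Real.dist_eq] at this
  obtain ⟨N, hN⟩ := eventually_atTop.mp hev
  refine ⟨N, fun n hn => ?_⟩
  have hclose := hN n hn
  have hc1 : |τseq n - τ| < δ₁ := lt_of_lt_of_le hclose (min_le_left _ _)
  have hc2 : |τseq n - τ| < 1 :=
    lt_of_lt_of_le hclose (le_trans (min_le_right _ _) (min_le_left _ _))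
  have hc3 : |τseq n - τ| < ε / 4 :=
    lt_of_lt_of_le hclose (le_trans (min_le_right _ _) (min_le_right _ _))
  have habs1 : τseq n - τ < 1 := lt_of_abs_lt hc2
  have habs1' : τ - τseq n < 1 := by
    have := neg_lt_of_abs_lt hc2; linarith
  have habs3 : τseq n - τ < ε / 4 := lt_of_abs_lt hc3
  have habs3' : τ - τseq n < ε / 4 := by
    have := neg_lt_of_abs_lt hc3; linarith
  -- upper bound: tS M (τseq n) < tS M τ + ε
  have hupper : tS M (τseq n) < tS M τ + ε := by
    have hkey : tS M (τseq n) ≤ Tu - τ + τseq n + δ₀ := by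
      apply key τ (τseq n) hτ (hτn n) δ₀ hδ₀ Tu hTu
      have hmemIcc1 : Tu - τ + τseq n ∈ Set.Icc (0:ℝ) K :=
        ⟨by have := hτn n; linarith, by linarith⟩
      have hmemIcc2 : Tu ∈ Set.Icc (0:ℝ) K := ⟨hTu0, by linarith⟩
      have hd : |(Tu - τ + τseq n) - Tu| < δ₁ := by
        rw [show (Tu - τ + τseq n) - Tu = τseq n - τ by ring]
        exact hc1
      have := hδ₁' _ hmemIcc1 _ hmemIcc2 hd
      linarith
    linarith
  -- lower bound: tS M τ < tS M (τseq n) + ε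
  have hlower : tS M τ < tS M (τseq n) + ε := by
    obtain ⟨Tn, hTn, hTnlt⟩ : ∃ Tn ∈ Adm (τseq n), Tn < sInf (Adm (τseq n)) + δ₀ :=
      Real.lt_sInf_add_pos (hne (τseq n) (hτn n)) hδ₀
    have hTnlt' : Tn < tS M (τseq n) + δ₀ := by rw [htS' (τseq n)]; exact hTnlt
    have haB : tS M (τseq n) ≤ K - 2 := by
      rw [htS']
      refine le_trans (csInf_le (hbdd _) (hmem (τseq n) (hτn n))) ?_
      exact max_le (by linarith) hKTr
    have hTnB : Tn ≤ K - 1 := by linarith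
    have hTn0 : 0 ≤ Tn := le_trans (hτn n) hTn.1
    have hτTn : τseq n ≤ Tn := hTn.1
    have hkey : tS M τ ≤ Tn - τseq n + τ + δ₀ := by
      apply key (τseq n) τ (hτn n) hτ δ₀ hδ₀ Tn hTn
      have hmemIcc1 : Tn - τseq n + τ ∈ Set.Icc (0:ℝ) K :=
        ⟨by linarith, by linarith⟩
      have hmemIcc2 : Tn ∈ Set.Icc (0:ℝ) K := ⟨hTn0, by linarith⟩
      have hd : |(Tn - τseq n + τ) - Tn| < δ₁ := by
        rw [show (Tn - τseq n + τ) - Tn = -(τseq n - τ) by ring, abs_neg]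
        exact hc1
      have := hδ₁' _ hmemIcc1 _ hmemIcc2 hd
      linarith
    linarith
  rw [Real.dist_eq, abs_sub_lt_iff]
  constructor <;> linarith
end

section
/- (Theorem 1.2, continuity part) Let M > 0 and τ ≥ 0 satisfy condition (★). Then the minimal time function t*(·,·) is jointly continuous at (M, τ): for every ε > 0 there exists δ > 0 such that |t*(M̃, τ̃) − t*(M, τ)| ≤ ε whenever M̃ > 0, τ̃ ≥ 0, |M̃ − M| ≤ δ and |τ̃ − τ| ≤ δ. -/
open RealInnerProductSpace Filter

theorem stmt_16
    {H : Type*} [NormedAddCommGroup H] [InnerProductSpace ℝ H] [CompleteSpace H]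
    (lam : ℝ) (hlam : 0 < lam)
    (S : ℝ → H →L[ℝ] H)
    (hS0 : S 0 = ContinuousLinearMap.id ℝ H)
    (hSadd : ∀ s t : ℝ, 0 ≤ s → 0 ≤ t → S (s + t) = (S s).comp (S t))
    (hSsa : ∀ t : ℝ, 0 ≤ t → ∀ x z : H, ⟪S t x, z⟫ = ⟪x, S t z⟫)
    (hScont : ∀ y : H, ContinuousOn (fun t => S t y) (Set.Ici (0 : ℝ)))
    (hSdecay : ∀ t : ℝ, 0 ≤ t → ∀ y : H, ‖S t y‖ ≤ Real.exp (-(lam * t)) * ‖y‖)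
    (P : H →L[ℝ] H)
    (hPsa : ∀ x z : H, ⟪P x, z⟫ = ⟪x, P z⟫)
    (hPnorm : ∀ u : H, ‖P u‖ ≤ ‖u‖)
    (y₀ : H) (r : ℝ) (hr : 0 < r)
    (tS : ℝ → ℝ → ℝ)
    (htS : ∀ M τ : ℝ, tS M τ =
      sInf {T : ℝ | τ ≤ T ∧ ∃ u : H, ‖u‖ ≤ M ∧ ‖S T y₀ + S (T - τ) (P u)‖ ≤ r})
    (hUC : ∀ φ : H, φ ≠ 0 → ∀ t : ℝ, 0 < t → P (S t φ) ≠ 0)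
    (M τ : ℝ) (hM : 0 < M) (hτ : 0 ≤ τ)
    (hstar : ∀ u : H, ‖u‖ ≤ M → r < ‖S τ y₀ + P u‖) :
    ∀ ε : ℝ, 0 < ε → ∃ δ : ℝ, 0 < δ ∧
      ∀ M' τ' : ℝ, 0 < M' → 0 ≤ τ' → |M' - M| ≤ δ → |τ' - τ| ≤ δ →
        |tS M' τ' - tS M τ| ≤ ε := by
  have hcomp : ∀ a b : ℝ, 0 ≤ a → 0 ≤ b → ∀ z : H, S (a + b) z = S a (S b z) := by
    intro a b ha hb z
    rw [hSadd a b ha hb]; rfl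
  have hcontr : ∀ t : ℝ, 0 ≤ t → ∀ z : H, ‖S t z‖ ≤ ‖z‖ := by
    intro t ht z
    have h1 := hSdecay t ht z
    have h2 : Real.exp (-(lam * t)) ≤ 1 := by
      rw [Real.exp_le_one_iff]
      nlinarith
    nlinarith [norm_nonneg z, Real.exp_pos (-(lam * t))]
  -- nonemptiness of the feasible set
  have hne : ∀ M₁ τ₁ : ℝ, 0 < M₁ → 0 ≤ τ₁ →
      Set.Nonempty {T : ℝ | τ₁ ≤ T ∧ ∃ u : H, ‖u‖ ≤ M₁ ∧ ‖S T y₀ + S (T - τ₁) (P u)‖ ≤ r} := by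
    intro M₁ τ₁ hM₁ hτ₁
    set T₀ : ℝ := Real.log ((‖y₀‖ + 1) / r) / lam with hT₀def
    refine ⟨max τ₁ T₀, le_max_left _ _, 0, by simp [hM₁.le], ?_⟩
    have h0 : P (0 : H) = 0 := map_zero P
    rw [h0, map_zero, add_zero]
    have hTnn : 0 ≤ max τ₁ T₀ := le_trans hτ₁ (le_max_left _ _)
    have hexpT₀ : Real.exp (-(lam * T₀)) = r / (‖y₀‖ + 1) := by
      rw [hT₀def, mul_div_cancel₀ _ hlam.ne', Real.exp_neg,
        Real.exp_log (by positivity), inv_div]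
    have hmono : Real.exp (-(lam * max τ₁ T₀)) ≤ Real.exp (-(lam * T₀)) := by
      apply Real.exp_le_exp.2
      have := le_max_right τ₁ T₀
      nlinarith
    calc ‖S (max τ₁ T₀) y₀‖ ≤ Real.exp (-(lam * max τ₁ T₀)) * ‖y₀‖ :=
          hSdecay _ hTnn y₀
      _ ≤ (r / (‖y₀‖ + 1)) * ‖y₀‖ := by
          rw [← hexpT₀]; exact mul_le_mul_of_nonneg_right hmono (norm_nonneg _)
      _ ≤ r := by
          rw [div_mul_eq_mul_div, div_le_iff₀ (by positivity)]
          nlinarith [norm_nonneg y₀]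
  intro ε hε
  set ε4 : ℝ := ε / 4 with hε4def
  have hε4 : 0 < ε4 := by positivity
  have hexplt : Real.exp (-(lam * ε4)) < 1 := by
    rw [Real.exp_lt_one_iff]; nlinarith
  set ρ : ℝ := r * (1 - Real.exp (-(lam * ε4))) with hρdef
  have hρ : 0 < ρ := mul_pos hr (by linarith)
  -- continuity of t ↦ S t y₀ at 0 from the right
  have hc : ContinuousWithinAt (fun t => S t y₀) (Set.Ici (0 : ℝ)) 0 :=
    hScont y₀ 0 Set.self_mem_Ici
  obtain ⟨δc, hδc, hcont⟩ := Metric.tendsto_nhdsWithin_nhds.mp hc (ρ / 2) (by linarith)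
  have hnear : ∀ t : ℝ, 0 ≤ t → t < δc → ‖S t y₀ - y₀‖ ≤ ρ / 2 := by
    intro t ht htδ
    have h := hcont (show t ∈ Set.Ici (0:ℝ) from ht)
      (by rw [Real.dist_eq, sub_zero, abs_of_nonneg ht]; exact htδ)
    rw [dist_eq_norm] at h
    have hy : S 0 y₀ = y₀ := by rw [hS0]; rfl
    have h' : ‖S t y₀ - y₀‖ < ρ / 2 := by simpa [hy] using h
    exact h'.le
  set δ : ℝ := min (min ε4 (ρ / 2)) (δc / 2) with hδdef
  have hδ : 0 < δ := lt_min (lt_min hε4 (by linarith)) (by linarith)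
  have hδε4 : δ ≤ ε4 := le_trans (min_le_left _ _) (min_le_left _ _)
  have hδρ : δ ≤ ρ / 2 := le_trans (min_le_left _ _) (min_le_right _ _)
  have hδδc : δ < δc := lt_of_le_of_lt (min_le_right _ _) (by linarith)
  -- the symmetric one-sided comparison lemma
  have key : ∀ M₁ τ₁ M₂ τ₂ : ℝ, 0 < M₁ → 0 ≤ τ₁ → 0 < M₂ → 0 ≤ τ₂ →
      |M₂ - M₁| ≤ δ → |τ₂ - τ₁| ≤ δ → tS M₂ τ₂ ≤ tS M₁ τ₁ + ε := by
    intro M₁ τ₁ M₂ τ₂ hM₁ hτ₁ hM₂ hτ₂ hMd hτd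
    rw [htS M₁ τ₁, htS M₂ τ₂]
    have hne₁ := hne M₁ τ₁ hM₁ hτ₁
    obtain ⟨T, ⟨hτT, u₁, hu₁, hst⟩, hTlt⟩ :=
      exists_lt_of_csInf_lt hne₁ (lt_add_of_pos_right
        (sInf {T : ℝ | τ₁ ≤ T ∧ ∃ u : H, ‖u‖ ≤ M₁ ∧ ‖S T y₀ + S (T - τ₁) (P u)‖ ≤ r}) hε4)
    have hT0 : 0 ≤ T := le_trans hτ₁ hτT
    set T₂ : ℝ := T + ε4 with hT₂def
    have hT₂0 : 0 ≤ T₂ := by linarith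
    have hT₂τ₁ : 0 ≤ T₂ - τ₁ := by linarith
    -- strict decay at time T₂
    have hstate2 : ‖S T₂ y₀ + S (T₂ - τ₁) (P u₁)‖ ≤ Real.exp (-(lam * ε4)) * r := by
      have e1 : S T₂ y₀ = S ε4 (S T y₀) := by
        rw [show T₂ = ε4 + T by rw [hT₂def]; ring]
        exact hcomp ε4 T hε4.le hT0 y₀
      have e2 : S (T₂ - τ₁) (P u₁) = S ε4 (S (T - τ₁) (P u₁)) := by
        rw [show T₂ - τ₁ = ε4 + (T - τ₁) by rw [hT₂def]; ring]
        exact hcomp ε4 (T - τ₁) hε4.le (by linarith) _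
      rw [e1, e2, ← map_add]
      calc ‖S ε4 (S T y₀ + S (T - τ₁) (P u₁))‖
          ≤ Real.exp (-(lam * ε4)) * ‖S T y₀ + S (T - τ₁) (P u₁)‖ :=
            hSdecay ε4 hε4.le _
        _ ≤ Real.exp (-(lam * ε4)) * r :=
            mul_le_mul_of_nonneg_left hst (Real.exp_pos _).le
    -- rescaled control
    set c : ℝ := min 1 (M₂ / M₁) with hcdef
    have hc0 : 0 ≤ c := le_min zero_le_one (div_nonneg hM₂.le hM₁.le)
    set u₂ : H := c • u₁ with hu₂def
    have hu₂ : ‖u₂‖ ≤ M₂ := by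
      rw [hu₂def, norm_smul, Real.norm_eq_abs, abs_of_nonneg hc0]
      calc c * ‖u₁‖ ≤ (M₂ / M₁) * M₁ :=
            mul_le_mul (min_le_right _ _) hu₁ (norm_nonneg _) (div_nonneg hM₂.le hM₁.le)
        _ = M₂ := div_mul_cancel₀ _ hM₁.ne'
    have hud : ‖u₂ - u₁‖ ≤ |M₂ - M₁| := by
      rcases le_total M₁ M₂ with h | h
      · have hc1 : c = 1 := min_eq_left ((one_le_div hM₁).2 h)
        rw [hu₂def, hc1, one_smul, sub_self, norm_zero]
        exact abs_nonneg _
      · have hc1 : c = M₂ / M₁ := min_eq_right ((div_le_one hM₁).2 h)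
        have e : u₂ - u₁ = (c - 1) • u₁ := by rw [hu₂def, sub_smul, one_smul]
        have hcle : c ≤ 1 := min_le_left _ _
        rw [e, norm_smul, Real.norm_eq_abs, abs_of_nonpos (by linarith)]
        have hcM : c * M₁ = M₂ := by rw [hc1]; exact div_mul_cancel₀ _ hM₁.ne'
        calc -(c - 1) * ‖u₁‖ = (1 - c) * ‖u₁‖ := by ring
          _ ≤ (1 - c) * M₁ := mul_le_mul_of_nonneg_left hu₁ (by linarith)
          _ = M₁ - M₂ := by rw [sub_mul, one_mul, hcM]
          _ ≤ |M₂ - M₁| := by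
              rw [abs_sub_comm, abs_of_nonneg (by linarith)]
    set T₃ : ℝ := T₂ + (τ₂ - τ₁) with hT₃def
    have hT₃τ₂ : T₃ - τ₂ = T₂ - τ₁ := by rw [hT₃def]; ring
    have hτ₂T₃ : τ₂ ≤ T₃ := by linarith [hT₂τ₁, hT₃τ₂.symm.le]
    have hT₃0 : 0 ≤ T₃ := le_trans hτ₂ hτ₂T₃
    -- the y₀-shift term
    have hB : ‖S T₃ y₀ - S T₂ y₀‖ ≤ ρ / 2 := by
      rcases le_total τ₁ τ₂ with h | h
      · have hσ : 0 ≤ τ₂ - τ₁ := by linarith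
        have e : S T₃ y₀ = S T₂ (S (τ₂ - τ₁) y₀) := by
          rw [show T₃ = T₂ + (τ₂ - τ₁) from hT₃def]
          exact hcomp T₂ (τ₂ - τ₁) hT₂0 hσ y₀
        have e2 : S T₂ y₀ = S T₂ (S 0 y₀) := by rw [hS0]; rfl
        rw [e, e2, ← map_sub, hS0]
        calc ‖S T₂ (S (τ₂ - τ₁) y₀ - ContinuousLinearMap.id ℝ H y₀)‖
            ≤ ‖S (τ₂ - τ₁) y₀ - y₀‖ := hcontr T₂ hT₂0 _
          _ ≤ ρ / 2 := hnear _ hσ (lt_of_le_of_lt (le_trans (le_abs_self _) hτd) hδδc)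
      · have hσ : 0 ≤ τ₁ - τ₂ := by linarith
        have e : S T₂ y₀ = S T₃ (S (τ₁ - τ₂) y₀) := by
          rw [show T₂ = T₃ + (τ₁ - τ₂) by rw [hT₃def]; ring]
          exact hcomp T₃ (τ₁ - τ₂) hT₃0 hσ y₀
        rw [e, show S T₃ y₀ = S T₃ (S 0 y₀) by rw [hS0]; rfl, ← map_sub, hS0]
        calc ‖S T₃ (ContinuousLinearMap.id ℝ H y₀ - S (τ₁ - τ₂) y₀)‖
            ≤ ‖(y₀ : H) - S (τ₁ - τ₂) y₀‖ := hcontr T₃ hT₃0 _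
          _ = ‖S (τ₁ - τ₂) y₀ - y₀‖ := norm_sub_rev _ _
          _ ≤ ρ / 2 := hnear _ hσ (lt_of_le_of_lt
              (le_trans (le_abs_self _) (by rwa [abs_sub_comm] at hτd)) hδδc)
    -- the control term
    have hC : ‖S (T₂ - τ₁) (P u₂ - P u₁)‖ ≤ δ := by
      calc ‖S (T₂ - τ₁) (P u₂ - P u₁)‖ ≤ ‖P u₂ - P u₁‖ := hcontr _ hT₂τ₁ _
        _ = ‖P (u₂ - u₁)‖ := by rw [map_sub]
        _ ≤ ‖u₂ - u₁‖ := hPnorm _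
        _ ≤ |M₂ - M₁| := hud
        _ ≤ δ := hMd
    -- feasibility at T₃ for (M₂, τ₂)
    have hfinal : ‖S T₃ y₀ + S (T₃ - τ₂) (P u₂)‖ ≤ r := by
      rw [hT₃τ₂]
      have decomp : S T₃ y₀ + S (T₂ - τ₁) (P u₂) =
          (S T₂ y₀ + S (T₂ - τ₁) (P u₁)) + (S T₃ y₀ - S T₂ y₀)
            + S (T₂ - τ₁) (P u₂ - P u₁) := by
        rw [map_sub]; abel
      rw [decomp]
      have habs : Real.exp (-(lam * ε4)) * r + ρ = r := by rw [hρdef]; ring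
      calc ‖(S T₂ y₀ + S (T₂ - τ₁) (P u₁)) + (S T₃ y₀ - S T₂ y₀)
              + S (T₂ - τ₁) (P u₂ - P u₁)‖
          ≤ ‖S T₂ y₀ + S (T₂ - τ₁) (P u₁)‖ + ‖S T₃ y₀ - S T₂ y₀‖
              + ‖S (T₂ - τ₁) (P u₂ - P u₁)‖ := norm_add₃_le
        _ ≤ Real.exp (-(lam * ε4)) * r + ρ / 2 + δ :=
            add_le_add (add_le_add hstate2 hB) hC
        _ ≤ r := by linarith
    have hmem : T₃ ∈ {T : ℝ | τ₂ ≤ T ∧ ∃ u : H, ‖u‖ ≤ M₂ ∧ ‖S T y₀ + S (T - τ₂) (P u)‖ ≤ r} :=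
      ⟨hτ₂T₃, u₂, hu₂, hfinal⟩
    have hbdd : BddBelow {T : ℝ | τ₂ ≤ T ∧ ∃ u : H, ‖u‖ ≤ M₂ ∧ ‖S T y₀ + S (T - τ₂) (P u)‖ ≤ r} :=
      ⟨τ₂, fun x hx => hx.1⟩
    calc sInf {T : ℝ | τ₂ ≤ T ∧ ∃ u : H, ‖u‖ ≤ M₂ ∧ ‖S T y₀ + S (T - τ₂) (P u)‖ ≤ r}
        ≤ T₃ := csInf_le hbdd hmem
      _ ≤ sInf {T : ℝ | τ₁ ≤ T ∧ ∃ u : H, ‖u‖ ≤ M₁ ∧ ‖S T y₀ + S (T - τ₁) (P u)‖ ≤ r} + ε := by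
        have hτle : τ₂ - τ₁ ≤ δ := le_trans (le_abs_self _) hτd
        rw [hT₃def, hT₂def]
        linarith
  refine ⟨δ, hδ, ?_⟩
  intro M' τ' hM' hτ' hMd hτd
  have h1 := key M τ M' τ' hM hτ hM' hτ' hMd hτd
  have h2 := key M' τ' M τ hM' hτ' hM hτ (by rwa [abs_sub_comm]) (by rwa [abs_sub_comm])
  rw [abs_sub_le_iff]
  exact ⟨by linarith, by linarith⟩
end

section
/- (Theorem 1.2, convergence of optimal controls) Let M > 0 and τ ≥ 0 satisfy condition (★), and let u* be the optimal control for (TP)^τ_M. Let (M_n) be positive reals and (τ_n) be nonnegative reals with M_n → M and τ_n → τ, and for each n suppose condition (★) holds at (M_n, τ_n) and u_n* is an optimal control for (TP)^{τ_n}_{M_n}. Then u_n* converges to u* strongly in H, i.e. ‖u_n* − u*‖ → 0 as n → ∞. -/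
open RealInnerProductSpace Filter

section Aux

variable {H : Type*} [NormedAddCommGroup H] [InnerProductSpace ℝ H] [CompleteSpace H]

lemma aux_sq_le {x y : ℝ} (hx : 0 ≤ x) (hy : 0 ≤ y) (h : x^2 ≤ y^2) : x ≤ y := by
  nlinarith

lemma aux_normS_le {lam : ℝ} (hlam : 0 < lam) (S : ℝ → H →L[ℝ] H)
    (hSdecay : ∀ t : ℝ, 0 ≤ t → ∀ y : H, ‖S t y‖ ≤ Real.exp (-(lam * t)) * ‖y‖)
    {t : ℝ} (ht : 0 ≤ t) (y : H) : ‖S t y‖ ≤ ‖y‖ := by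
  refine (hSdecay t ht y).trans ?_
  have h1 : Real.exp (-(lam * t)) ≤ 1 := Real.exp_le_one_iff.2 (by nlinarith)
  nlinarith [norm_nonneg y, Real.exp_pos (-(lam*t))]

lemma aux_S_anti {lam : ℝ} (hlam : 0 < lam) (S : ℝ → H →L[ℝ] H)
    (hSadd : ∀ s t : ℝ, 0 ≤ s → 0 ≤ t → S (s + t) = (S s).comp (S t))
    (hSdecay : ∀ t : ℝ, 0 ≤ t → ∀ y : H, ‖S t y‖ ≤ Real.exp (-(lam * t)) * ‖y‖)
    {s t : ℝ} (hs : 0 ≤ s) (hst : s ≤ t) (w : H) : ‖S t w‖ ≤ ‖S s w‖ := by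
  have h : S t w = S (t - s) (S s w) := by
    have h2 := hSadd (t - s) s (by linarith) hs
    rw [show t - s + s = t by ring] at h2
    rw [h2]
    rfl
  rw [h]
  exact aux_normS_le hlam S hSdecay (by linarith) _

lemma aux_inner_SS (S : ℝ → H →L[ℝ] H)
    (hSadd : ∀ s t : ℝ, 0 ≤ s → 0 ≤ t → S (s + t) = (S s).comp (S t))
    (hSsa : ∀ t : ℝ, 0 ≤ t → ∀ x z : H, ⟪S t x, z⟫ = ⟪x, S t z⟫)
    {s t : ℝ} (hs : 0 ≤ s) (ht : 0 ≤ t) (w : H) :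
    ⟪S s w, S t w⟫ = ‖S ((s+t)/2) w‖ ^ 2 := by
  have e1 : ⟪S s w, S t w⟫ = ⟪w, S (s+t) w⟫ := by
    rw [hSsa s hs w (S t w), hSadd s t hs ht]
    rfl
  have e2 : ⟪S ((s+t)/2) w, S ((s+t)/2) w⟫ = ⟪w, S (s+t) w⟫ := by
    rw [hSsa ((s+t)/2) (by linarith) w (S ((s+t)/2) w)]
    congr 1
    have h3 := hSadd ((s+t)/2) ((s+t)/2) (by linarith) (by linarith)
    rw [show (s+t)/2 + (s+t)/2 = s + t by ring] at h3
    rw [h3]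
    rfl
  rw [e1, ← e2, real_inner_self_eq_norm_sq]

lemma aux_g_mid (S : ℝ → H →L[ℝ] H)
    (hSadd : ∀ s t : ℝ, 0 ≤ s → 0 ≤ t → S (s + t) = (S s).comp (S t))
    (hSsa : ∀ t : ℝ, 0 ≤ t → ∀ x z : H, ⟪S t x, z⟫ = ⟪x, S t z⟫)
    {s d : ℝ} (hd : 0 ≤ d) (hds : d ≤ s) (w : H) :
    2 * ‖S s w‖ ^ 2 ≤ ‖S (s - d) w‖ ^ 2 + ‖S (s + d) w‖ ^ 2 := by
  have e : ‖S s w‖ ^ 2 = ⟪S (s - d) w, S (s + d) w⟫ := by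
    rw [aux_inner_SS S hSadd hSsa (by linarith) (by linarith) w,
      show (s - d + (s + d))/2 = s by ring]
  rw [e]
  nlinarith [real_inner_le_norm (S (s - d) w) (S (s + d) w),
    sq_nonneg (‖S (s - d) w‖ - ‖S (s + d) w‖)]





variable {H : Type*} [NormedAddCommGroup H] [InnerProductSpace ℝ H] [CompleteSpace H]



-- chain lemma
lemma aux_chain {lam : ℝ} (hlam : 0 < lam) (S : ℝ → H →L[ℝ] H)
    (hSadd : ∀ s t : ℝ, 0 ≤ s → 0 ≤ t → S (s + t) = (S s).comp (S t))
    (hSsa : ∀ t : ℝ, 0 ≤ t → ∀ x z : H, ⟪S t x, z⟫ = ⟪x, S t z⟫)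
    (hSdecay : ∀ t : ℝ, 0 ≤ t → ∀ y : H, ‖S t y‖ ≤ Real.exp (-(lam * t)) * ‖y‖)
    (w : H) {c h : ℝ} (hc : 0 < c) (hh : 0 < h) :
    ∀ k : ℕ, (k : ℝ) * h ≤ c →
      ((k:ℝ)+1) * (‖S c w‖^2 - ‖S (c+h) w‖^2) ≤ ‖S (c - (k:ℝ)*h) w‖^2 - ‖S (c+h) w‖^2 ∧
      ‖S c w‖^2 - ‖S (c+h) w‖^2 ≤ ‖S (c - (k:ℝ)*h) w‖^2 - ‖S (c - (k:ℝ)*h + h) w‖^2 := by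
  intro k
  induction k with
  | zero =>
    intro _
    norm_num
  | succ k ih =>
    intro hk1
    push_cast at hk1
    have hk : (k:ℝ) * h ≤ c := by nlinarith
    obtain ⟨A, B⟩ := ih hk
    have hmid := aux_g_mid S hSadd hSsa (le_of_lt hh)
      (show h ≤ c - (k:ℝ)*h by linarith) w
    have e3 : c - ((k:ℝ)+1)*h = c - (k:ℝ)*h - h := by ring
    have e4 : c - ((k:ℝ)+1)*h + h = c - (k:ℝ)*h := by ring
    push_cast
    rw [e3, show c - (k:ℝ)*h - h + h = c - (k:ℝ)*h by ring]
    constructor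
    · nlinarith
    · nlinarith

set_option maxHeartbeats 1000000 in
lemma aux_keyE {lam : ℝ} (hlam : 0 < lam) (S : ℝ → H →L[ℝ] H)
    (hS0 : S 0 = ContinuousLinearMap.id ℝ H)
    (hSadd : ∀ s t : ℝ, 0 ≤ s → 0 ≤ t → S (s + t) = (S s).comp (S t))
    (hSsa : ∀ t : ℝ, 0 ≤ t → ∀ x z : H, ⟪S t x, z⟫ = ⟪x, S t z⟫)
    (hSdecay : ∀ t : ℝ, 0 ≤ t → ∀ y : H, ‖S t y‖ ≤ Real.exp (-(lam * t)) * ‖y‖)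
    (w : H) {b c : ℝ} (hc : 0 < c) (hcb : c ≤ b) :
    ‖S b w - S c w‖^2 ≤ (b - c)/c * ‖w‖^2 := by
  rcases eq_or_lt_of_le hcb with rfl | hlt
  · simp
  obtain ⟨h, hh_def⟩ : ∃ h : ℝ, h = (b - c)/2 := ⟨(b - c)/2, rfl⟩
  have hh : 0 < h := by rw [hh_def]; linarith
  have hb0 : (0:ℝ) ≤ b := by linarith
  have hc0 : (0:ℝ) ≤ c := le_of_lt hc
  have hch : c + h ≤ b := by rw [hh_def]; linarith
  have hch0 : (0:ℝ) ≤ c + h := by linarith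
  -- expansion
  have expand : ‖S b w - S c w‖^2 = ‖S b w‖^2 + ‖S c w‖^2 - 2*‖S (c+h) w‖^2 := by
    have e0 := norm_sub_sq_real (S b w) (S c w)
    rw [aux_inner_SS S hSadd hSsa hb0 hc0 w, show (b+c)/2 = c + h by rw [hh_def]; ring] at e0
    linarith
  have hgb : ‖S b w‖ ≤ ‖S (c+h) w‖ :=
    aux_S_anti hlam S hSadd hSdecay hch0 hch w
  obtain ⟨k, hk_le, hk_gt⟩ : ∃ k : ℕ, (k:ℝ) * h ≤ c ∧ c / h < (k:ℝ) + 1 := by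
    refine ⟨Nat.floor (c / h), ?_, Nat.lt_floor_add_one _⟩
    have h1 : ((Nat.floor (c / h) : ℝ)) ≤ c / h := Nat.floor_le (by positivity)
    calc ((Nat.floor (c / h) : ℝ)) * h ≤ (c/h) * h := by nlinarith
    _ = c := by field_simp
  obtain ⟨A, _⟩ := aux_chain hlam S hSadd hSsa hSdecay w hc hh k hk_le
  have hg0 : ‖S (c - (k:ℝ)*h) w‖^2 ≤ ‖w‖^2 := by
    have h1 : ‖S (c - (k:ℝ)*h) w‖ ≤ ‖S 0 w‖ :=
      aux_S_anti hlam S hSadd hSdecay le_rfl (by linarith) w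
    rw [hS0] at h1
    simp only [ContinuousLinearMap.id_apply] at h1
    nlinarith [norm_nonneg (S (c - (k:ℝ)*h) w)]
  have hD : ((k:ℝ)+1) * (‖S c w‖^2 - ‖S (c+h) w‖^2) ≤ ‖w‖^2 := by
    nlinarith [sq_nonneg ‖S (c+h) w‖]
  have hlhs : ‖S b w - S c w‖^2 ≤ ‖S c w‖^2 - ‖S (c+h) w‖^2 := by
    nlinarith [norm_nonneg (S b w), norm_nonneg (S (c+h) w)]
  -- conclude
  have hbc : b - c = 2*h := by rw [hh_def]; ring
  rcases le_or_gt (‖S c w‖^2 - ‖S (c+h) w‖^2) 0 with hD0 | hD0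
  · have h9 : (0:ℝ) ≤ (b-c)/c * ‖w‖^2 := by
      apply mul_nonneg (div_nonneg (by linarith) hc0) (sq_nonneg _)
    linarith
  · have hck : c < ((k:ℝ)+1) * h := by
      calc c = (c/h) * h := by field_simp
      _ < ((k:ℝ)+1) * h := mul_lt_mul_of_pos_right hk_gt hh
    have h6 := mul_le_mul_of_nonneg_right hD (le_of_lt hh)
    have h7 := mul_lt_mul_of_pos_left hck hD0
    have h5 : (‖S c w‖^2 - ‖S (c+h) w‖^2) * c ≤ ‖w‖^2 * h := by nlinarith [h6, h7]
    have h8 := mul_le_mul_of_nonneg_right hlhs hc0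
    rw [hbc, div_mul_eq_mul_div, le_div_iff₀ hc]
    nlinarith [sq_nonneg ‖w‖, h8, h5, hh]


lemma aux_E' {lam : ℝ} (hlam : 0 < lam) (S : ℝ → H →L[ℝ] H)
    (hS0 : S 0 = ContinuousLinearMap.id ℝ H)
    (hSadd : ∀ s t : ℝ, 0 ≤ s → 0 ≤ t → S (s + t) = (S s).comp (S t))
    (hSsa : ∀ t : ℝ, 0 ≤ t → ∀ x z : H, ⟪S t x, z⟫ = ⟪x, S t z⟫)
    (hSdecay : ∀ t : ℝ, 0 ≤ t → ∀ y : H, ‖S t y‖ ≤ Real.exp (-(lam * t)) * ‖y‖)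
    (w : H) {b c m : ℝ} (hm : 0 < m) (hbm : m ≤ b) (hcm : m ≤ c) :
    ‖S b w - S c w‖^2 ≤ |b - c|/m * ‖w‖^2 := by
  rcases le_total c b with hcb | hbc
  · have h1 := aux_keyE hlam S hS0 hSadd hSsa hSdecay w (lt_of_lt_of_le hm hcm) hcb
    refine h1.trans ?_
    rw [abs_of_nonneg (by linarith)]
    apply mul_le_mul_of_nonneg_right _ (sq_nonneg _)
    apply div_le_div_of_nonneg_left (by linarith) hm hcm
  · rw [norm_sub_rev]
    have h1 := aux_keyE hlam S hS0 hSadd hSsa hSdecay w (lt_of_lt_of_le hm hbm) hbc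
    refine h1.trans ?_
    rw [abs_of_nonpos (by linarith), neg_sub]
    apply mul_le_mul_of_nonneg_right _ (sq_nonneg _)
    apply div_le_div_of_nonneg_left (by linarith) hm hbm

lemma aux_Enorm {lam : ℝ} (hlam : 0 < lam) (S : ℝ → H →L[ℝ] H)
    (hS0 : S 0 = ContinuousLinearMap.id ℝ H)
    (hSadd : ∀ s t : ℝ, 0 ≤ s → 0 ≤ t → S (s + t) = (S s).comp (S t))
    (hSsa : ∀ t : ℝ, 0 ≤ t → ∀ x z : H, ⟪S t x, z⟫ = ⟪x, S t z⟫)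
    (hSdecay : ∀ t : ℝ, 0 ≤ t → ∀ y : H, ‖S t y‖ ≤ Real.exp (-(lam * t)) * ‖y‖)
    (w : H) {b c m C ε : ℝ} (hm : 0 < m) (hbm : m ≤ b) (hcm : m ≤ c)
    (hC : ‖w‖ ≤ C) (hε : 0 < ε)
    (hd : |b - c| ≤ m * (ε / (C+1))^2) :
    ‖S b w - S c w‖ ≤ ε := by
  have hC0 : (0:ℝ) ≤ C := le_trans (norm_nonneg w) hC
  have h1 := aux_E' hlam S hS0 hSadd hSsa hSdecay w hm hbm hcm
  apply aux_sq_le (norm_nonneg _) (le_of_lt hε)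
  refine h1.trans ?_
  have h2 : |b - c|/m ≤ (ε/(C+1))^2 := by
    rw [div_le_iff₀ hm]; linarith [hd]
  have h3 : ‖w‖^2 ≤ C^2 := by nlinarith [norm_nonneg w]
  have h4 : (ε/(C+1))^2 * C^2 ≤ ε^2 := by
    rw [div_pow, div_mul_eq_mul_div, div_le_iff₀ (by positivity)]
    nlinarith
  calc |b - c|/m * ‖w‖^2 ≤ (ε/(C+1))^2 * C^2 := by
        apply mul_le_mul h2 h3 (sq_nonneg _) (by positivity)
  _ ≤ ε^2 := h4

lemma aux_Etend {lam : ℝ} (hlam : 0 < lam) (S : ℝ → H →L[ℝ] H)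
    (hS0 : S 0 = ContinuousLinearMap.id ℝ H)
    (hSadd : ∀ s t : ℝ, 0 ≤ s → 0 ≤ t → S (s + t) = (S s).comp (S t))
    (hSsa : ∀ t : ℝ, 0 ≤ t → ∀ x z : H, ⟪S t x, z⟫ = ⟪x, S t z⟫)
    (hSdecay : ∀ t : ℝ, 0 ≤ t → ∀ y : H, ‖S t y‖ ≤ Real.exp (-(lam * t)) * ‖y‖)
    {a : ℝ} (ha : 0 < a) {aseq : ℕ → ℝ} (haseq : Tendsto aseq atTop (nhds a))
    (w : ℕ → H) {C : ℝ} (hw : ∀ᶠ n in atTop, ‖w n‖ ≤ C) :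
    Tendsto (fun n => ‖S (aseq n) (w n) - S a (w n)‖) atTop (nhds 0) := by
  rw [Metric.tendsto_atTop]
  intro ε hε
  have hev1 : ∀ᶠ n in atTop, a/2 ≤ aseq n := haseq.eventually (eventually_ge_nhds (by linarith))
  have habs : Tendsto (fun n => |aseq n - a|) atTop (nhds 0) := by
    have h2 := (haseq.sub_const a).abs
    simpa using h2
  have hev2 : ∀ᶠ n in atTop, |aseq n - a| ≤ (a/2) * (ε/2 / (C+1))^2 := by
    have hC0 : (0:ℝ) ≤ C := by
      obtain ⟨n, hn⟩ := hw.exists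
      exact le_trans (norm_nonneg _) hn
    apply habs.eventually_le_const
    positivity
  obtain ⟨N, hN⟩ := ((hev1.and hev2).and hw).exists_forall_of_atTop
  refine ⟨N, fun n hn => ?_⟩
  obtain ⟨⟨h1, h2⟩, h3⟩ := hN n hn
  rw [Real.dist_eq, sub_zero, abs_of_nonneg (norm_nonneg _)]
  have := aux_Enorm hlam S hS0 hSadd hSsa hSdecay (w n)
    (show (0:ℝ) < a/2 by linarith) h1 (show a/2 ≤ a by linarith) h3
    (show (0:ℝ) < ε/2 by linarith) h2
  linarith

set_option maxHeartbeats 1600000 in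
lemma aux_opt_struct {lam : ℝ} (hlam : 0 < lam) (S : ℝ → H →L[ℝ] H)
    (hS0 : S 0 = ContinuousLinearMap.id ℝ H)
    (hSadd : ∀ s t : ℝ, 0 ≤ s → 0 ≤ t → S (s + t) = (S s).comp (S t))
    (hSsa : ∀ t : ℝ, 0 ≤ t → ∀ x z : H, ⟪S t x, z⟫ = ⟪x, S t z⟫)
    (hSdecay : ∀ t : ℝ, 0 ≤ t → ∀ y : H, ‖S t y‖ ≤ Real.exp (-(lam * t)) * ‖y‖)
    (P : H →L[ℝ] H)
    (hPsa : ∀ x z : H, ⟪P x, z⟫ = ⟪x, P z⟫)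
    (hPnorm : ∀ u : H, ‖P u‖ ≤ ‖u‖)
    (y₀ : H) (r : ℝ) (hr : 0 < r)
    (tS : ℝ → ℝ → ℝ)
    (htS : ∀ M τ : ℝ, tS M τ =
      sInf {T : ℝ | τ ≤ T ∧ ∃ u : H, ‖u‖ ≤ M ∧ ‖S T y₀ + S (T - τ) (P u)‖ ≤ r})
    (hUC : ∀ φ : H, φ ≠ 0 → ∀ t : ℝ, 0 < t → P (S t φ) ≠ 0)
    (M τ : ℝ) (hM : 0 < M) (hτ : 0 ≤ τ)
    (hstar : ∀ u : H, ‖u‖ ≤ M → r < ‖S τ y₀ + P u‖)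
    (u : H) (hu : ‖u‖ ≤ M)
    (hopt : ‖S (tS M τ) y₀ + S (tS M τ - τ) (P u)‖ ≤ r) :
    τ < tS M τ ∧
    (∀ v : H, ‖v‖ ≤ M → r ≤ ‖S (tS M τ) y₀ + S (tS M τ - τ) (P v)‖) ∧
    ‖S (tS M τ) y₀ + S (tS M τ - τ) (P u)‖ = r ∧
    P (S (tS M τ - τ) (S (tS M τ) y₀ + S (tS M τ - τ) (P u))) ≠ 0 ∧
    ‖u‖ = M ∧
    u = -(M / ‖P (S (tS M τ - τ) (S (tS M τ) y₀ + S (tS M τ - τ) (P u)))‖) •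
        P (S (tS M τ - τ) (S (tS M τ) y₀ + S (tS M τ - τ) (P u))) := by
  have hAne : ∃ T : ℝ, τ ≤ T ∧ ∃ v : H, ‖v‖ ≤ M ∧ ‖S T y₀ + S (T - τ) (P v)‖ ≤ r := by
    have h2 : Tendsto (fun T : ℝ => -(lam * T)) atTop atBot :=
      tendsto_neg_atTop_atBot.comp (tendsto_id.const_mul_atTop hlam)
    have h3 := Real.tendsto_exp_atBot.comp h2
    have h4 : Tendsto (fun T : ℝ => Real.exp (-(lam * T)) * ‖y₀‖) atTop (nhds 0) := by
      simpa using h3.mul_const ‖y₀‖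
    obtain ⟨T, hT1, hT2⟩ := ((h4.eventually_lt_const hr).and (eventually_ge_atTop τ)).exists
    refine ⟨T, hT2, 0, by simpa using hM.le, ?_⟩
    simp only [map_zero, add_zero]
    exact (hSdecay T (le_trans hτ hT2) y₀).trans hT1.le
  have hbdd : BddBelow {T : ℝ | τ ≤ T ∧ ∃ v : H, ‖v‖ ≤ M ∧ ‖S T y₀ + S (T - τ) (P v)‖ ≤ r} :=
    ⟨τ, fun x hx => hx.1⟩
  have htle : ∀ T : ℝ, (τ ≤ T ∧ ∃ v : H, ‖v‖ ≤ M ∧ ‖S T y₀ + S (T - τ) (P v)‖ ≤ r) →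
      tS M τ ≤ T := by
    intro T hT
    rw [htS M τ]
    exact csInf_le hbdd hT
  have hτt : τ ≤ tS M τ := by
    rw [htS M τ]
    exact le_csInf hAne fun x hx => hx.1
  -- (b) strict
  have htlt : τ < tS M τ := by
    rcases eq_or_lt_of_le hτt with heq | hlt
    · exfalso
      rw [← heq] at hopt
      rw [sub_self, hS0] at hopt
      simp only [ContinuousLinearMap.id_apply] at hopt
      exact absurd hopt (not_le.2 (hstar u hu))
    · exact hlt
  have ht0 : 0 < tS M τ := lt_of_le_of_lt hτ htlt
  have ha0 : 0 < tS M τ - τ := by linarith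
  -- (c) minimality
  have hmin : ∀ v : H, ‖v‖ ≤ M → r ≤ ‖S (tS M τ) y₀ + S (tS M τ - τ) (P v)‖ := by
    intro v hv
    by_contra hlt2
    push_neg at hlt2
    obtain ⟨η, hη_def⟩ : ∃ η : ℝ, η = r - ‖S (tS M τ) y₀ + S (tS M τ - τ) (P v)‖ := ⟨_, rfl⟩
    have hη : 0 < η := by rw [hη_def]; linarith
    obtain ⟨δ, hδ_def⟩ : ∃ δ : ℝ,
        δ = min ((tS M τ - τ)/2) (min ((tS M τ/2) * (η/2/(‖y₀‖+1))^2)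
          (((tS M τ - τ)/2) * (η/2/(‖P v‖+1))^2)) := ⟨_, rfl⟩
    have hδpos : 0 < δ := by
      rw [hδ_def]
      apply lt_min (by linarith)
      apply lt_min
      · positivity
      · positivity
    have hδ1 : δ ≤ (tS M τ - τ)/2 := hδ_def ▸ min_le_left _ _
    have hδ2 : δ ≤ (tS M τ/2) * (η/2/(‖y₀‖+1))^2 := hδ_def ▸ (min_le_right _ _).trans (min_le_left _ _)
    have hδ3 : δ ≤ ((tS M τ - τ)/2) * (η/2/(‖P v‖+1))^2 := hδ_def ▸ (min_le_right _ _).trans (min_le_right _ _)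
    have hT2 : tS M τ/2 ≤ tS M τ - δ := by linarith [hτ]
    have hTm : tS M τ - τ - δ ≥ (tS M τ - τ)/2 := by linarith
    have e1 : ‖S (tS M τ - δ) y₀ - S (tS M τ) y₀‖ ≤ η/2 := by
      apply aux_Enorm hlam S hS0 hSadd hSsa hSdecay y₀
        (show (0:ℝ) < tS M τ/2 by linarith) hT2 (show tS M τ/2 ≤ tS M τ by linarith)
        (le_refl ‖y₀‖) (by linarith)
      rw [show tS M τ - δ - tS M τ = -δ by ring, abs_neg, abs_of_pos hδpos]
      exact hδ2.trans (by nlinarith [sq_nonneg (η/2/(‖y₀‖+1))])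
    have e2 : ‖S (tS M τ - δ - τ) (P v) - S (tS M τ - τ) (P v)‖ ≤ η/2 := by
      apply aux_Enorm hlam S hS0 hSadd hSsa hSdecay (P v)
        (show (0:ℝ) < (tS M τ - τ)/2 by linarith)
        (show (tS M τ - τ)/2 ≤ tS M τ - δ - τ by linarith)
        (show (tS M τ - τ)/2 ≤ tS M τ - τ by linarith)
        (le_refl ‖P v‖) (by linarith)
      rw [show tS M τ - δ - τ - (tS M τ - τ) = -δ by ring, abs_neg, abs_of_pos hδpos]
      exact hδ3.trans (by nlinarith [sq_nonneg (η/2/(‖P v‖+1))])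
    have hstate : ‖S (tS M τ - δ) y₀ + S (tS M τ - δ - τ) (P v)‖ ≤ r := by
      have hdec : S (tS M τ - δ) y₀ + S (tS M τ - δ - τ) (P v) =
          (S (tS M τ - δ) y₀ - S (tS M τ) y₀) + (S (tS M τ - δ - τ) (P v) - S (tS M τ - τ) (P v))
          + (S (tS M τ) y₀ + S (tS M τ - τ) (P v)) := by abel
      rw [hdec]
      calc ‖_ + _ + _‖ ≤ ‖_‖ + ‖_‖ + ‖_‖ := norm_add₃_le
      _ ≤ η/2 + η/2 + (r - η) := by
          refine add_le_add (add_le_add e1 e2) ?_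
          rw [hη_def]
          linarith
      _ = r := by ring
    have := htle (tS M τ - δ) ⟨by linarith, v, hv, hstate⟩
    linarith
  -- (d) norm = r
  have hynorm : ‖S (tS M τ) y₀ + S (tS M τ - τ) (P u)‖ = r :=
    le_antisymm hopt (hmin u hu)
  -- (e) q ≠ 0
  have hy0 : S (tS M τ) y₀ + S (tS M τ - τ) (P u) ≠ 0 := by
    intro h0
    rw [h0, norm_zero] at hynorm
    linarith
  have hq0 : P (S (tS M τ - τ) (S (tS M τ) y₀ + S (tS M τ - τ) (P u))) ≠ 0 :=
    hUC _ hy0 _ ha0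
  -- variational inequality
  have hvar : ∀ v : H, ‖v‖ ≤ M →
      0 ≤ ⟪P (S (tS M τ - τ) (S (tS M τ) y₀ + S (tS M τ - τ) (P u))), v - u⟫ := by
    intro v hv
    obtain ⟨y, hy_def⟩ : ∃ y : H, y = S (tS M τ) y₀ + S (tS M τ - τ) (P u) := ⟨_, rfl⟩
    obtain ⟨Bd, hBd_def⟩ : ∃ Bd : H, Bd = S (tS M τ - τ) (P (v - u)) := ⟨_, rfl⟩
    have key : ∀ s : ℝ, 0 < s → s ≤ 1 → 0 ≤ 2*s*⟪y, Bd⟫ + s^2*‖Bd‖^2 := by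
      intro s hs hs1
      have hnorm : ‖u + s • (v - u)‖ ≤ M := by
        have he : u + s • (v - u) = (1-s) • u + s • v := by module
        rw [he]
        calc ‖(1-s) • u + s • v‖ ≤ ‖(1-s) • u‖ + ‖s • v‖ := norm_add_le _ _
        _ = (1-s)*‖u‖ + s*‖v‖ := by
            rw [norm_smul, norm_smul, Real.norm_eq_abs, Real.norm_eq_abs,
              abs_of_nonneg (by linarith), abs_of_nonneg (by linarith)]
        _ ≤ (1-s)*M + s*M := by
            apply add_le_add
            · exact mul_le_mul_of_nonneg_left hu (by linarith)
            · exact mul_le_mul_of_nonneg_left hv (by linarith)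
        _ = M := by ring
      have hmins := hmin (u + s • (v - u)) hnorm
      have hstate : S (tS M τ) y₀ + S (tS M τ - τ) (P (u + s • (v - u))) = y + s • Bd := by
        rw [hy_def, hBd_def, map_add, map_smul, map_add, map_smul]
        abel
      rw [hstate] at hmins
      have hexp : ‖y + s • Bd‖^2 = ‖y‖^2 + 2*(s*⟪y, Bd⟫) + s^2*‖Bd‖^2 := by
        rw [norm_add_sq_real, real_inner_smul_right, norm_smul, Real.norm_eq_abs,
          abs_of_pos hs, mul_pow]
      have hyr : ‖y‖ = r := by rw [hy_def]; exact hynorm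
      nlinarith [hmins, hexp, hyr]
    have hc : 0 ≤ ⟪y, Bd⟫ := by
      by_contra hneg
      push_neg at hneg
      obtain ⟨s₀, hs₀_def⟩ : ∃ s₀ : ℝ, s₀ = min 1 ((-⟪y, Bd⟫)/(‖Bd‖^2+1)) := ⟨_, rfl⟩
      have hs₀pos : 0 < s₀ := by
        rw [hs₀_def]
        apply lt_min one_pos
        apply div_pos (by linarith) (by positivity)
      have hs₀le : s₀ ≤ 1 := hs₀_def ▸ min_le_left _ _
      have hs₀le2 : s₀ ≤ (-⟪y, Bd⟫)/(‖Bd‖^2+1) := hs₀_def ▸ min_le_right _ _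
      have hkey := key s₀ hs₀pos hs₀le
      have hb : s₀ * (‖Bd‖^2+1) ≤ -⟪y, Bd⟫ := by
        have h9 := mul_le_mul_of_nonneg_right hs₀le2
          (show (0:ℝ) ≤ ‖Bd‖^2+1 by positivity)
        rw [div_mul_cancel₀] at h9
        · exact h9
        · positivity
      nlinarith [hkey, hb, hs₀pos, sq_nonneg ‖Bd‖]
    have heq : ⟪P (S (tS M τ - τ) (S (tS M τ) y₀ + S (tS M τ - τ) (P u))), v - u⟫ = ⟪y, Bd⟫ := by
      rw [hy_def, hBd_def]
      rw [hPsa (S (tS M τ - τ) (S (tS M τ) y₀ + S (tS M τ - τ) (P u))) (v - u)]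
      rw [hSsa (tS M τ - τ) (le_of_lt ha0) (S (tS M τ) y₀ + S (tS M τ - τ) (P u)) (P (v - u))]
    rw [heq]
    exact hc
  -- conclusion
  obtain ⟨q, hq_def⟩ : ∃ q : H,
      q = P (S (tS M τ - τ) (S (tS M τ) y₀ + S (tS M τ - τ) (P u))) := ⟨_, rfl⟩
  have hnq : 0 < ‖q‖ := by rw [hq_def]; exact norm_pos_iff.2 hq0
  have hv₀ : ‖-(M / ‖q‖) • q‖ = M := by
    rw [norm_smul, Real.norm_eq_abs, abs_neg, abs_of_pos (by positivity)]
    field_simp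
  have h1 := hvar (-(M / ‖q‖) • q) (le_of_eq hv₀)
  rw [← hq_def] at h1
  rw [inner_sub_right, real_inner_smul_right, real_inner_self_eq_norm_sq] at h1
  have h3 : ⟪q, u⟫ ≤ -(M * ‖q‖) := by
    have he : -(M / ‖q‖) * ‖q‖^2 = -(M * ‖q‖) := by
      field_simp
    linarith [h1, he ▸ h1]
  have h4 : -(‖q‖ * ‖u‖) ≤ ⟪q, u⟫ := by
    have := real_inner_le_norm q (-u)
    rw [inner_neg_right, norm_neg] at this
    linarith
  have huM : ‖u‖ = M := by
    have : M * ‖q‖ ≤ ‖q‖ * ‖u‖ := by linarith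
    have h5 : M ≤ ‖u‖ := by
      by_contra hcon
      push_neg at hcon
      nlinarith
    linarith
  have hinner : ⟪u, q⟫ = -(M * ‖q‖) := by
    rw [real_inner_comm]
    have : -(‖q‖ * M) ≤ ⟪q, u⟫ := by rw [← huM]; exact h4
    linarith [h3]
  have hzero : ‖u + (M / ‖q‖) • q‖^2 = 0 := by
    rw [norm_add_sq_real, real_inner_smul_right, norm_smul, Real.norm_eq_abs,
      abs_of_pos (show (0:ℝ) < M / ‖q‖ by positivity), mul_pow, hinner, huM]
    field_simp
    ring
  have hfinal : u = -(M / ‖q‖) • q := by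
    have h6 : u + (M / ‖q‖) • q = 0 := by
      rw [← norm_eq_zero]
      exact pow_eq_zero_iff (n := 2) (by norm_num) |>.1 hzero
    have h7 : u = -((M / ‖q‖) • q) := by
      rw [eq_neg_iff_add_eq_zero]; exact h6
    rw [h7, neg_smul]
  exact ⟨htlt, hmin, hynorm, hq0, huM, hq_def ▸ hfinal⟩

end Aux

set_option maxHeartbeats 3000000 in
theorem stmt_17
    {H : Type*} [NormedAddCommGroup H] [InnerProductSpace ℝ H] [CompleteSpace H]
    (lam : ℝ) (hlam : 0 < lam)
    (S : ℝ → H →L[ℝ] H)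
    (hS0 : S 0 = ContinuousLinearMap.id ℝ H)
    (hSadd : ∀ s t : ℝ, 0 ≤ s → 0 ≤ t → S (s + t) = (S s).comp (S t))
    (hSsa : ∀ t : ℝ, 0 ≤ t → ∀ x z : H, ⟪S t x, z⟫ = ⟪x, S t z⟫)
    (hScont : ∀ y : H, ContinuousOn (fun t => S t y) (Set.Ici (0 : ℝ)))
    (hSdecay : ∀ t : ℝ, 0 ≤ t → ∀ y : H, ‖S t y‖ ≤ Real.exp (-(lam * t)) * ‖y‖)
    (P : H →L[ℝ] H)
    (hPsa : ∀ x z : H, ⟪P x, z⟫ = ⟪x, P z⟫)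
    (hPnorm : ∀ u : H, ‖P u‖ ≤ ‖u‖)
    (y₀ : H) (r : ℝ) (hr : 0 < r)
    (tS : ℝ → ℝ → ℝ)
    (htS : ∀ M τ : ℝ, tS M τ =
      sInf {T : ℝ | τ ≤ T ∧ ∃ u : H, ‖u‖ ≤ M ∧ ‖S T y₀ + S (T - τ) (P u)‖ ≤ r})
    (hUC : ∀ φ : H, φ ≠ 0 → ∀ t : ℝ, 0 < t → P (S t φ) ≠ 0)
    (M τ : ℝ) (hM : 0 < M) (hτ : 0 ≤ τ)
    (hstar : ∀ u : H, ‖u‖ ≤ M → r < ‖S τ y₀ + P u‖)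
    (ustar : H) (hustar : ‖ustar‖ ≤ M)
    (hopt : ‖S (tS M τ) y₀ + S (tS M τ - τ) (P ustar)‖ ≤ r)
    (Mseq : ℕ → ℝ) (τseq : ℕ → ℝ) (hMn : ∀ n, 0 < Mseq n) (hτn : ∀ n, 0 ≤ τseq n)
    (hMconv : Tendsto Mseq atTop (nhds M)) (hτconv : Tendsto τseq atTop (nhds τ))
    (hstarn : ∀ n, ∀ u : H, ‖u‖ ≤ Mseq n → r < ‖S (τseq n) y₀ + P u‖)
    (useq : ℕ → H) (hun : ∀ n, ‖useq n‖ ≤ Mseq n)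
    (hoptn : ∀ n, ‖S (tS (Mseq n) (τseq n)) y₀ +
      S (tS (Mseq n) (τseq n) - τseq n) (P (useq n))‖ ≤ r) :
    Tendsto (fun n => ‖useq n - ustar‖) atTop (nhds 0) := by
  obtain ⟨htlt, hmin, hynorm, hq0, hunormM, hueq⟩ :=
    aux_opt_struct hlam S hS0 hSadd hSsa hSdecay P hPsa hPnorm y₀ r hr tS htS hUC
      M τ hM hτ hstar ustar hustar hopt
  have hstruct := fun n =>
    aux_opt_struct hlam S hS0 hSadd hSsa hSdecay P hPsa hPnorm y₀ r hr tS htS hUC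
      (Mseq n) (τseq n) (hMn n) (hτn n) (hstarn n) (useq n) (hun n) (hoptn n)
  have htltn : ∀ n, τseq n < tS (Mseq n) (τseq n) := fun n => (hstruct n).1
  have hminn := fun n => (hstruct n).2.1
  have hynormn : ∀ n, ‖S (tS (Mseq n) (τseq n)) y₀ +
      S (tS (Mseq n) (τseq n) - τseq n) (P (useq n))‖ = r := fun n => (hstruct n).2.2.1
  have hq0n := fun n => (hstruct n).2.2.2.1
  have hunormn : ∀ n, ‖useq n‖ = Mseq n := fun n => (hstruct n).2.2.2.2.1
  have hueqn := fun n => (hstruct n).2.2.2.2.2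
  have ht0 : 0 < tS M τ := lt_of_le_of_lt hτ htlt
  have ha0 : 0 < tS M τ - τ := by linarith
  have htle : ∀ (M' τ' : ℝ), ∀ T : ℝ,
      (τ' ≤ T ∧ ∃ v : H, ‖v‖ ≤ M' ∧ ‖S T y₀ + S (T - τ') (P v)‖ ≤ r) →
      tS M' τ' ≤ T := by
    intro M' τ' T hT
    rw [htS]
    exact csInf_le ⟨τ', fun x hx => hx.1⟩ hT
  -- Step 2a : upper bound on minimal times
  have claim2a : ∀ ε : ℝ, 0 < ε → ∀ᶠ n in atTop, tS (Mseq n) (τseq n) ≤ tS M τ + ε := by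
    intro ε hε
    obtain ⟨gap, hgap_def⟩ : ∃ g : ℝ, g = r - Real.exp (-(lam * (ε/2))) * r := ⟨_, rfl⟩
    have hgap0 : 0 < gap := by
      rw [hgap_def]
      have h5 := Real.exp_lt_one_iff.2 (show -(lam * (ε/2)) < 0 by nlinarith)
      nlinarith
    have hcconv : Tendsto (fun n => min 1 (Mseq n / M)) atTop (nhds 1) := by
      have h1 : Tendsto (fun n => Mseq n / M) atTop (nhds (M / M)) := hMconv.div_const M
      rw [div_self (ne_of_gt hM)] at h1
      have h2 := (tendsto_const_nhds (x := (1:ℝ)) (f := atTop (α := ℕ))).min h1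
      simpa using h2
    have hev2 : ∀ᶠ n in atTop, |min 1 (Mseq n / M) - 1| ≤ gap/(2*(M+1)) := by
      have h3 := (hcconv.sub_const 1).abs
      simp only [sub_self, abs_zero] at h3
      exact h3.eventually_le_const (by positivity)
    have hev1 : ∀ᶠ n in atTop,
        |τseq n - τ| ≤ min (ε/4) ((tS M τ + ε/4) * (gap/2/(‖y₀‖+1))^2) := by
      have h3 := (hτconv.sub_const τ).abs
      simp only [sub_self, abs_zero] at h3
      apply h3.eventually_le_const
      apply lt_min (by linarith)
      apply mul_pos (by linarith)
      apply pow_pos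
      apply div_pos (by linarith) (by positivity)
    filter_upwards [hev1, hev2] with n h1 h2
    have h1a : |τseq n - τ| ≤ ε/4 := le_trans h1 (min_le_left _ _)
    have h1b : |τseq n - τ| ≤ (tS M τ + ε/4) * (gap/2/(‖y₀‖+1))^2 :=
      le_trans h1 (min_le_right _ _)
    have h1c := abs_le.1 h1a
    have hc0 : 0 ≤ min 1 (Mseq n / M) := le_min (by norm_num) (le_of_lt (div_pos (hMn n) hM))
    have hmem : τseq n ≤ tS M τ + ε/2 + τseq n - τ ∧ ∃ v : H, ‖v‖ ≤ Mseq n ∧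
        ‖S (tS M τ + ε/2 + τseq n - τ) y₀ +
          S ((tS M τ + ε/2 + τseq n - τ) - τseq n) (P v)‖ ≤ r := by
      refine ⟨by linarith, min 1 (Mseq n / M) • ustar, ?_, ?_⟩
      · rw [norm_smul, Real.norm_eq_abs, abs_of_nonneg hc0, hunormM]
        calc min 1 (Mseq n / M) * M ≤ (Mseq n / M) * M :=
              mul_le_mul_of_nonneg_right (min_le_right _ _) (le_of_lt hM)
        _ = Mseq n := by field_simp
      · have hTsub : (tS M τ + ε/2 + τseq n - τ) - τseq n = (tS M τ - τ) + ε/2 := by ring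
        rw [hTsub]
        have hsplit : S (tS M τ + ε/2 + τseq n - τ) y₀ +
            S ((tS M τ - τ) + ε/2) (P (min 1 (Mseq n / M) • ustar)) =
            (S (tS M τ + ε/2 + τseq n - τ) y₀ - S (tS M τ + ε/2) y₀)
            + (min 1 (Mseq n / M) - 1) • S ((tS M τ - τ) + ε/2) (P ustar)
            + (S (tS M τ + ε/2) y₀ + S ((tS M τ - τ) + ε/2) (P ustar)) := by
          rw [map_smul, map_smul]
          module
        rw [hsplit]
        have hbase : ‖S (tS M τ + ε/2) y₀ + S ((tS M τ - τ) + ε/2) (P ustar)‖ ≤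
            Real.exp (-(lam * (ε/2))) * r := by
          have e1 : S (tS M τ + ε/2) y₀ = S (ε/2) (S (tS M τ) y₀) := by
            rw [show tS M τ + ε/2 = ε/2 + tS M τ by ring,
              hSadd (ε/2) (tS M τ) (by linarith) (by linarith)]
            rfl
          have e2 : S ((tS M τ - τ) + ε/2) (P ustar) =
              S (ε/2) (S (tS M τ - τ) (P ustar)) := by
            rw [show (tS M τ - τ) + ε/2 = ε/2 + (tS M τ - τ) by ring,
              hSadd (ε/2) (tS M τ - τ) (by linarith) (by linarith)]
            rfl
          rw [e1, e2, ← map_add]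
          calc ‖S (ε/2) (S (tS M τ) y₀ + S (tS M τ - τ) (P ustar))‖ ≤
              Real.exp (-(lam * (ε/2))) * ‖S (tS M τ) y₀ + S (tS M τ - τ) (P ustar)‖ :=
                hSdecay (ε/2) (by linarith) _
          _ = Real.exp (-(lam * (ε/2))) * r := by rw [hynorm]
        have herr1 : ‖S (tS M τ + ε/2 + τseq n - τ) y₀ - S (tS M τ + ε/2) y₀‖ ≤ gap/2 := by
          apply aux_Enorm hlam S hS0 hSadd hSsa hSdecay y₀
            (show (0:ℝ) < tS M τ + ε/4 by linarith)
            (show tS M τ + ε/4 ≤ tS M τ + ε/2 + τseq n - τ by linarith [h1c.1])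
            (show tS M τ + ε/4 ≤ tS M τ + ε/2 by linarith)
            (le_refl ‖y₀‖) (show (0:ℝ) < gap/2 by linarith)
          rw [show tS M τ + ε/2 + τseq n - τ - (tS M τ + ε/2) = τseq n - τ by ring]
          exact h1b
        have herr2 : ‖(min 1 (Mseq n / M) - 1) • S ((tS M τ - τ) + ε/2) (P ustar)‖ ≤ gap/2 := by
          rw [norm_smul, Real.norm_eq_abs]
          have hb1 : ‖S ((tS M τ - τ) + ε/2) (P ustar)‖ ≤ M + 1 := by
            refine le_trans (aux_normS_le hlam S hSdecay (by linarith) _) ?_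
            refine le_trans (hPnorm ustar) ?_
            rw [hunormM]
            linarith
          calc |min 1 (Mseq n / M) - 1| * ‖S ((tS M τ - τ) + ε/2) (P ustar)‖ ≤
              (gap/(2*(M+1))) * (M+1) :=
                mul_le_mul h2 hb1 (norm_nonneg _) (by positivity)
          _ = gap/2 := by field_simp
        calc ‖_ + _ + _‖ ≤ ‖_‖ + ‖_‖ + ‖_‖ := norm_add₃_le
        _ ≤ gap/2 + gap/2 + Real.exp (-(lam * (ε/2))) * r :=
            add_le_add (add_le_add herr1 herr2) hbase
        _ = r := by rw [hgap_def]; ring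
    have := htle (Mseq n) (τseq n) _ hmem
    linarith [h1c.2, this]
  -- Step 2b : lower bound on minimal times
  have claim2b : ∀ ε : ℝ, 0 < ε → ∀ᶠ n in atTop, tS M τ - ε ≤ tS (Mseq n) (τseq n) := by
    intro ε hε
    obtain ⟨gap, hgap_def⟩ : ∃ g : ℝ, g = r - Real.exp (-(lam * (ε/4))) * r := ⟨_, rfl⟩
    have hgap0 : 0 < gap := by
      rw [hgap_def]
      have h5 := Real.exp_lt_one_iff.2 (show -(lam * (ε/4)) < 0 by nlinarith)
      nlinarith
    have hdconv : Tendsto (fun n => min 1 (M / Mseq n)) atTop (nhds 1) := by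
      have h1 : Tendsto (fun n => M / Mseq n) atTop (nhds (M / M)) :=
        tendsto_const_nhds.div hMconv (ne_of_gt hM)
      rw [div_self (ne_of_gt hM)] at h1
      have h2 := (tendsto_const_nhds (x := (1:ℝ)) (f := atTop (α := ℕ))).min h1
      simpa using h2
    have hev2 : ∀ᶠ n in atTop, |min 1 (M / Mseq n) - 1| ≤ gap/(2*(M+1)) := by
      have h3 := (hdconv.sub_const 1).abs
      simp only [sub_self, abs_zero] at h3
      exact h3.eventually_le_const (by positivity)
    have hev1 : ∀ᶠ n in atTop,
        |τseq n - τ| ≤ min (ε/8) ((ε/8) * (gap/2/(‖y₀‖+1))^2) := by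
      have h3 := (hτconv.sub_const τ).abs
      simp only [sub_self, abs_zero] at h3
      apply h3.eventually_le_const
      apply lt_min (by linarith)
      apply mul_pos (by linarith)
      apply pow_pos
      apply div_pos (by linarith) (by positivity)
    have hev3 : ∀ᶠ n in atTop, Mseq n ≤ M + 1 :=
      hMconv.eventually_le_const (show M < M + 1 by linarith)
    filter_upwards [hev1, hev2, hev3] with n h1 h2 h3
    by_contra hcon
    push_neg at hcon
    have h1a : |τseq n - τ| ≤ ε/8 := le_trans h1 (min_le_left _ _)
    have h1b : |τseq n - τ| ≤ (ε/8) * (gap/2/(‖y₀‖+1))^2 := le_trans h1 (min_le_right _ _)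
    have h1c := abs_le.1 h1a
    have han : (0:ℝ) ≤ tS (Mseq n) (τseq n) - τseq n := le_of_lt (sub_pos.2 (htltn n))
    have htn0 : (0:ℝ) ≤ tS (Mseq n) (τseq n) := le_trans (hτn n) (le_of_lt (htltn n))
    have hd0 : 0 ≤ min 1 (M / Mseq n) := le_min (by norm_num) (le_of_lt (div_pos hM (hMn n)))
    have hmem : τ ≤ tS (Mseq n) (τseq n) + ε/4 + τ - τseq n ∧ ∃ v : H, ‖v‖ ≤ M ∧
        ‖S (tS (Mseq n) (τseq n) + ε/4 + τ - τseq n) y₀ +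
          S ((tS (Mseq n) (τseq n) + ε/4 + τ - τseq n) - τ) (P v)‖ ≤ r := by
      refine ⟨by linarith, min 1 (M / Mseq n) • useq n, ?_, ?_⟩
      · rw [norm_smul, Real.norm_eq_abs, abs_of_nonneg hd0, hunormn n]
        calc min 1 (M / Mseq n) * Mseq n ≤ (M / Mseq n) * Mseq n :=
              mul_le_mul_of_nonneg_right (min_le_right _ _) (le_of_lt (hMn n))
        _ = M := div_mul_cancel₀ M (ne_of_gt (hMn n))
      · have hTsub : (tS (Mseq n) (τseq n) + ε/4 + τ - τseq n) - τ =
            (tS (Mseq n) (τseq n) - τseq n) + ε/4 := by ring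
        rw [hTsub]
        have hsplit : S (tS (Mseq n) (τseq n) + ε/4 + τ - τseq n) y₀ +
            S ((tS (Mseq n) (τseq n) - τseq n) + ε/4) (P (min 1 (M / Mseq n) • useq n)) =
            (S (tS (Mseq n) (τseq n) + ε/4 + τ - τseq n) y₀ -
              S (tS (Mseq n) (τseq n) + ε/4) y₀)
            + (min 1 (M / Mseq n) - 1) •
                S ((tS (Mseq n) (τseq n) - τseq n) + ε/4) (P (useq n))
            + S (ε/4) (S (tS (Mseq n) (τseq n)) y₀ +
                S (tS (Mseq n) (τseq n) - τseq n) (P (useq n))) := by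
          have e1 : S (tS (Mseq n) (τseq n) + ε/4) y₀ =
              S (ε/4) (S (tS (Mseq n) (τseq n)) y₀) := by
            rw [show tS (Mseq n) (τseq n) + ε/4 = ε/4 + tS (Mseq n) (τseq n) by ring,
              hSadd (ε/4) (tS (Mseq n) (τseq n)) (by linarith) htn0]
            rfl
          have e2 : S ((tS (Mseq n) (τseq n) - τseq n) + ε/4) (P (useq n)) =
              S (ε/4) (S (tS (Mseq n) (τseq n) - τseq n) (P (useq n))) := by
            rw [show (tS (Mseq n) (τseq n) - τseq n) + ε/4
                = ε/4 + (tS (Mseq n) (τseq n) - τseq n) by ring,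
              hSadd (ε/4) (tS (Mseq n) (τseq n) - τseq n) (by linarith) han]
            rfl
          rw [map_smul, map_smul, e1, e2, map_add]
          module
        rw [hsplit]
        have hbase : ‖S (ε/4) (S (tS (Mseq n) (τseq n)) y₀ +
            S (tS (Mseq n) (τseq n) - τseq n) (P (useq n)))‖ ≤
            Real.exp (-(lam * (ε/4))) * r := by
          calc ‖S (ε/4) (S (tS (Mseq n) (τseq n)) y₀ +
              S (tS (Mseq n) (τseq n) - τseq n) (P (useq n)))‖ ≤
              Real.exp (-(lam * (ε/4))) * ‖S (tS (Mseq n) (τseq n)) y₀ +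
                S (tS (Mseq n) (τseq n) - τseq n) (P (useq n))‖ :=
                hSdecay (ε/4) (by linarith) _
          _ = Real.exp (-(lam * (ε/4))) * r := by rw [hynormn n]
        have herr1 : ‖S (tS (Mseq n) (τseq n) + ε/4 + τ - τseq n) y₀ -
            S (tS (Mseq n) (τseq n) + ε/4) y₀‖ ≤ gap/2 := by
          apply aux_Enorm hlam S hS0 hSadd hSsa hSdecay y₀
            (show (0:ℝ) < ε/8 by linarith)
            (show ε/8 ≤ tS (Mseq n) (τseq n) + ε/4 + τ - τseq n by
              have := h1c.2; linarith)
            (show ε/8 ≤ tS (Mseq n) (τseq n) + ε/4 by linarith)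
            (le_refl ‖y₀‖) (show (0:ℝ) < gap/2 by linarith)
          rw [show tS (Mseq n) (τseq n) + ε/4 + τ - τseq n -
            (tS (Mseq n) (τseq n) + ε/4) = -(τseq n - τ) by ring, abs_neg]
          exact h1b
        have herr2 : ‖(min 1 (M / Mseq n) - 1) •
            S ((tS (Mseq n) (τseq n) - τseq n) + ε/4) (P (useq n))‖ ≤ gap/2 := by
          rw [norm_smul, Real.norm_eq_abs]
          have hb1 : ‖S ((tS (Mseq n) (τseq n) - τseq n) + ε/4) (P (useq n))‖ ≤ M + 1 := by
            refine le_trans (aux_normS_le hlam S hSdecay (by linarith) _) ?_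
            exact le_trans (hPnorm (useq n)) (le_trans (hun n) h3)
          calc |min 1 (M / Mseq n) - 1| *
              ‖S ((tS (Mseq n) (τseq n) - τseq n) + ε/4) (P (useq n))‖ ≤
              (gap/(2*(M+1))) * (M+1) :=
                mul_le_mul h2 hb1 (norm_nonneg _) (by positivity)
          _ = gap/2 := by field_simp
        calc ‖_ + _ + _‖ ≤ ‖_‖ + ‖_‖ + ‖_‖ := norm_add₃_le
        _ ≤ gap/2 + gap/2 + Real.exp (-(lam * (ε/4))) * r :=
            add_le_add (add_le_add herr1 herr2) hbase
        _ = r := by rw [hgap_def]; ring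
    have hle := htle M τ _ hmem
    have := h1c.2
    linarith
  have htconv : Tendsto (fun n => tS (Mseq n) (τseq n)) atTop (nhds (tS M τ)) := by
    rw [tendsto_order]
    constructor
    · intro x hx
      filter_upwards [claim2b ((tS M τ - x)/2) (by linarith)] with n hn
      linarith
    · intro x hx
      filter_upwards [claim2a ((x - tS M τ)/2) (by linarith)] with n hn
      linarith
    -- abbreviation-free versions of sequences
  have haconv : Tendsto (fun n => tS (Mseq n) (τseq n) - τseq n) atTop
      (nhds (tS M τ - τ)) := htconv.sub hτconv
  have hdconv : Tendsto (fun n => min 1 (M / Mseq n)) atTop (nhds 1) := by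
    have h1 : Tendsto (fun n => M / Mseq n) atTop (nhds (M / M)) :=
      tendsto_const_nhds.div hMconv (ne_of_gt hM)
    rw [div_self (ne_of_gt hM)] at h1
    have h2 := (tendsto_const_nhds (x := (1:ℝ)) (f := atTop (α := ℕ))).min h1
    simpa using h2
  have hevM : ∀ᶠ n in atTop, Mseq n ≤ M + 1 :=
    hMconv.eventually_le_const (show M < M + 1 by linarith)
  have hPb : ∀ᶠ n in atTop, ‖P (useq n)‖ ≤ M + 1 := by
    filter_upwards [hevM] with n h
    exact le_trans (hPnorm _) (le_trans (hun n) h)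
  have han : ∀ n, (0:ℝ) ≤ tS (Mseq n) (τseq n) - τseq n :=
    fun n => le_of_lt (sub_pos.2 (htltn n))
  -- error terms
  have h3a : Tendsto (fun n => ‖S (tS (Mseq n) (τseq n)) y₀ - S (tS M τ) y₀‖)
      atTop (nhds 0) :=
    aux_Etend hlam S hS0 hSadd hSsa hSdecay ht0 htconv (fun _ => y₀)
      (Eventually.of_forall fun _ => le_refl ‖y₀‖)
  have h3c : Tendsto (fun n => ‖S (tS (Mseq n) (τseq n) - τseq n) (P (useq n)) -
      S (tS M τ - τ) (P (useq n))‖) atTop (nhds 0) :=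
    aux_Etend hlam S hS0 hSadd hSsa hSdecay ha0 haconv (fun n => P (useq n)) hPb
  have h3b : Tendsto (fun n => |min 1 (M / Mseq n) - 1| * (M+1)) atTop (nhds 0) := by
    have h4 := ((hdconv.sub_const 1).abs).mul_const (M+1)
    simpa using h4
  -- convergence of transported states
  have hδb : ∀ᶠ n in atTop,
      ‖(S (tS M τ) y₀ + min 1 (M / Mseq n) • S (tS M τ - τ) (P (useq n))) -
       (S (tS (Mseq n) (τseq n)) y₀ + S (tS (Mseq n) (τseq n) - τseq n) (P (useq n)))‖ ≤
      ‖S (tS (Mseq n) (τseq n)) y₀ - S (tS M τ) y₀‖ + |min 1 (M / Mseq n) - 1| * (M+1)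
        + ‖S (tS (Mseq n) (τseq n) - τseq n) (P (useq n)) - S (tS M τ - τ) (P (useq n))‖ := by
    filter_upwards [hPb] with n hp
    have hdec : (S (tS M τ) y₀ + min 1 (M / Mseq n) • S (tS M τ - τ) (P (useq n))) -
       (S (tS (Mseq n) (τseq n)) y₀ + S (tS (Mseq n) (τseq n) - τseq n) (P (useq n))) =
       (-(S (tS (Mseq n) (τseq n)) y₀ - S (tS M τ) y₀)) +
       (min 1 (M / Mseq n) - 1) • S (tS M τ - τ) (P (useq n)) +
       (-(S (tS (Mseq n) (τseq n) - τseq n) (P (useq n)) - S (tS M τ - τ) (P (useq n)))) := by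
      module
    rw [hdec]
    refine le_trans norm_add₃_le ?_
    refine add_le_add (add_le_add ?_ ?_) ?_
    · rw [norm_neg]
    · rw [norm_smul, Real.norm_eq_abs]
      refine mul_le_mul_of_nonneg_left ?_ (abs_nonneg _)
      exact le_trans (aux_normS_le hlam S hSdecay (le_of_lt ha0) _) hp
    · rw [norm_neg]
  have hδ0 : Tendsto (fun n =>
      ‖(S (tS M τ) y₀ + min 1 (M / Mseq n) • S (tS M τ - τ) (P (useq n))) -
       (S (tS (Mseq n) (τseq n)) y₀ + S (tS (Mseq n) (τseq n) - τseq n) (P (useq n)))‖)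
      atTop (nhds 0) := by
    refine squeeze_zero' (Eventually.of_forall fun n => norm_nonneg _) hδb ?_
    have h5 := (h3a.add h3b).add h3c
    simpa using h5
  -- midpoint bound
  have hcb : ∀ n, ‖min 1 (M / Mseq n) • useq n‖ ≤ M := by
    intro n
    rw [norm_smul, Real.norm_eq_abs,
      abs_of_nonneg (le_min (by norm_num) (le_of_lt (div_pos hM (hMn n)))), hunormn n]
    calc min 1 (M / Mseq n) * Mseq n ≤ (M / Mseq n) * Mseq n :=
          mul_le_mul_of_nonneg_right (min_le_right _ _) (le_of_lt (hMn n))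
    _ = M := div_mul_cancel₀ M (ne_of_gt (hMn n))
  have hmid : ∀ n, 2*r ≤ ‖(S (tS M τ) y₀ + min 1 (M / Mseq n) • S (tS M τ - τ) (P (useq n)))
      + (S (tS M τ) y₀ + S (tS M τ - τ) (P ustar))‖ := by
    intro n
    have hm2 : ‖(1/2 : ℝ) • (min 1 (M / Mseq n) • useq n + ustar)‖ ≤ M := by
      rw [norm_smul, Real.norm_eq_abs]
      have h6 : ‖min 1 (M / Mseq n) • useq n + ustar‖ ≤ M + M :=
        le_trans (norm_add_le _ _) (add_le_add (hcb n) (le_of_eq hunormM))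
      rw [abs_of_nonneg (by norm_num : (0:ℝ) ≤ 1/2)]
      linarith
    have h5 := hmin _ hm2
    have he : S (tS M τ) y₀ + S (tS M τ - τ) (P ((1/2 : ℝ) • (min 1 (M / Mseq n) • useq n + ustar))) =
        (1/2 : ℝ) • ((S (tS M τ) y₀ + min 1 (M / Mseq n) • S (tS M τ - τ) (P (useq n)))
          + (S (tS M τ) y₀ + S (tS M τ - τ) (P ustar))) := by
      rw [map_smul, map_smul, map_add, map_add, map_smul, map_smul]
      module
    rw [he, norm_smul, Real.norm_eq_abs, abs_of_nonneg (by norm_num : (0:ℝ) ≤ 1/2)] at h5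
    linarith
  have hpar : ∀ n,
      ‖(S (tS M τ) y₀ + min 1 (M / Mseq n) • S (tS M τ - τ) (P (useq n))) -
        (S (tS M τ) y₀ + S (tS M τ - τ) (P ustar))‖^2 ≤
      4*r*‖(S (tS M τ) y₀ + min 1 (M / Mseq n) • S (tS M τ - τ) (P (useq n))) -
       (S (tS (Mseq n) (τseq n)) y₀ + S (tS (Mseq n) (τseq n) - τseq n) (P (useq n)))‖ +
      2*(‖(S (tS M τ) y₀ + min 1 (M / Mseq n) • S (tS M τ - τ) (P (useq n))) -
       (S (tS (Mseq n) (τseq n)) y₀ + S (tS (Mseq n) (τseq n) - τseq n) (P (useq n)))‖ *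
       ‖(S (tS M τ) y₀ + min 1 (M / Mseq n) • S (tS M τ - τ) (P (useq n))) -
       (S (tS (Mseq n) (τseq n)) y₀ + S (tS (Mseq n) (τseq n) - τseq n) (P (useq n)))‖) := by
    intro n
    have hadd := norm_add_sq_real
      (S (tS M τ) y₀ + min 1 (M / Mseq n) • S (tS M τ - τ) (P (useq n)))
      (S (tS M τ) y₀ + S (tS M τ - τ) (P ustar))
    have hsub := norm_sub_sq_real
      (S (tS M τ) y₀ + min 1 (M / Mseq n) • S (tS M τ - τ) (P (useq n)))
      (S (tS M τ) y₀ + S (tS M τ - τ) (P ustar))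
    have hyn : ‖S (tS M τ) y₀ + min 1 (M / Mseq n) • S (tS M τ - τ) (P (useq n))‖ ≤
        r + ‖(S (tS M τ) y₀ + min 1 (M / Mseq n) • S (tS M τ - τ) (P (useq n))) -
         (S (tS (Mseq n) (τseq n)) y₀ + S (tS (Mseq n) (τseq n) - τseq n) (P (useq n)))‖ := by
      have h7 : S (tS M τ) y₀ + min 1 (M / Mseq n) • S (tS M τ - τ) (P (useq n)) =
          (S (tS (Mseq n) (τseq n)) y₀ + S (tS (Mseq n) (τseq n) - τseq n) (P (useq n))) +
          ((S (tS M τ) y₀ + min 1 (M / Mseq n) • S (tS M τ - τ) (P (useq n))) -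
           (S (tS (Mseq n) (τseq n)) y₀ + S (tS (Mseq n) (τseq n) - τseq n) (P (useq n)))) := by
        abel
      calc ‖S (tS M τ) y₀ + min 1 (M / Mseq n) • S (tS M τ - τ) (P (useq n))‖ = ‖_ + _‖ := by
            rw [← h7]
      _ ≤ _ := norm_add_le _ _
      _ ≤ _ := by rw [hynormn n]
    have hys : ‖S (tS M τ) y₀ + S (tS M τ - τ) (P ustar)‖ = r := hynorm
    have hm := hmid n
    nlinarith [hadd, hsub, hyn, hys, hm, norm_nonneg
      ((S (tS M τ) y₀ + min 1 (M / Mseq n) • S (tS M τ - τ) (P (useq n))) -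
       (S (tS (Mseq n) (τseq n)) y₀ + S (tS (Mseq n) (τseq n) - τseq n) (P (useq n)))),
      norm_nonneg ((S (tS M τ) y₀ + min 1 (M / Mseq n) • S (tS M τ - τ) (P (useq n))) +
        (S (tS M τ) y₀ + S (tS M τ - τ) (P ustar))),
      norm_nonneg (S (tS M τ) y₀ + min 1 (M / Mseq n) • S (tS M τ - τ) (P (useq n)))]
  have hytconv : Tendsto (fun n =>
      ‖(S (tS M τ) y₀ + min 1 (M / Mseq n) • S (tS M τ - τ) (P (useq n))) -
        (S (tS M τ) y₀ + S (tS M τ - τ) (P ustar))‖) atTop (nhds 0) := by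
    refine squeeze_zero' (Eventually.of_forall fun n => norm_nonneg _)
      (Eventually.of_forall fun n => Real.le_sqrt_of_sq_le (hpar n)) ?_
    have h8 : Tendsto (fun n =>
        4*r*‖(S (tS M τ) y₀ + min 1 (M / Mseq n) • S (tS M τ - τ) (P (useq n))) -
         (S (tS (Mseq n) (τseq n)) y₀ + S (tS (Mseq n) (τseq n) - τseq n) (P (useq n)))‖ +
        2*(‖(S (tS M τ) y₀ + min 1 (M / Mseq n) • S (tS M τ - τ) (P (useq n))) -
         (S (tS (Mseq n) (τseq n)) y₀ + S (tS (Mseq n) (τseq n) - τseq n) (P (useq n)))‖ *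
         ‖(S (tS M τ) y₀ + min 1 (M / Mseq n) • S (tS M τ - τ) (P (useq n))) -
         (S (tS (Mseq n) (τseq n)) y₀ + S (tS (Mseq n) (τseq n) - τseq n) (P (useq n)))‖))
        atTop (nhds 0) := by
      have h9 := (hδ0.const_mul (4*r)).add ((hδ0.mul hδ0).const_mul 2)
      simpa using h9
    have h10 := h8.sqrt
    simpa using h10
  have hyconv : Tendsto (fun n =>
      ‖(S (tS (Mseq n) (τseq n)) y₀ + S (tS (Mseq n) (τseq n) - τseq n) (P (useq n))) -
        (S (tS M τ) y₀ + S (tS M τ - τ) (P ustar))‖) atTop (nhds 0) := by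
    have h11 : Tendsto (fun n =>
        ‖(S (tS M τ) y₀ + min 1 (M / Mseq n) • S (tS M τ - τ) (P (useq n))) -
         (S (tS (Mseq n) (τseq n)) y₀ + S (tS (Mseq n) (τseq n) - τseq n) (P (useq n)))‖ +
        ‖(S (tS M τ) y₀ + min 1 (M / Mseq n) • S (tS M τ - τ) (P (useq n))) -
          (S (tS M τ) y₀ + S (tS M τ - τ) (P ustar))‖) atTop (nhds 0) := by
      simpa using hδ0.add hytconv
    refine squeeze_zero' (Eventually.of_forall fun n => norm_nonneg _)
      (Eventually.of_forall fun n => ?_) h11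
    have h7 : (S (tS (Mseq n) (τseq n)) y₀ + S (tS (Mseq n) (τseq n) - τseq n) (P (useq n))) -
        (S (tS M τ) y₀ + S (tS M τ - τ) (P ustar)) =
        (-((S (tS M τ) y₀ + min 1 (M / Mseq n) • S (tS M τ - τ) (P (useq n))) -
         (S (tS (Mseq n) (τseq n)) y₀ + S (tS (Mseq n) (τseq n) - τseq n) (P (useq n))))) +
        ((S (tS M τ) y₀ + min 1 (M / Mseq n) • S (tS M τ - τ) (P (useq n))) -
          (S (tS M τ) y₀ + S (tS M τ - τ) (P ustar))) := by
      abel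
    rw [h7]
    refine le_trans (norm_add_le _ _) ?_
    rw [norm_neg]
  -- Step 4 : convergence of the q's
  have h4c : Tendsto (fun n => ‖S (tS (Mseq n) (τseq n) - τseq n)
      (S (tS M τ) y₀ + S (tS M τ - τ) (P ustar)) -
      S (tS M τ - τ) (S (tS M τ) y₀ + S (tS M τ - τ) (P ustar))‖) atTop (nhds 0) :=
    aux_Etend hlam S hS0 hSadd hSsa hSdecay ha0 haconv
      (fun _ => S (tS M τ) y₀ + S (tS M τ - τ) (P ustar))
      (Eventually.of_forall fun _ => le_refl _)
  have hqconv : Tendsto (fun n =>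
      ‖P (S (tS (Mseq n) (τseq n) - τseq n)
          (S (tS (Mseq n) (τseq n)) y₀ + S (tS (Mseq n) (τseq n) - τseq n) (P (useq n)))) -
        P (S (tS M τ - τ) (S (tS M τ) y₀ + S (tS M τ - τ) (P ustar)))‖) atTop (nhds 0) := by
    have h11 : Tendsto (fun n =>
        ‖(S (tS (Mseq n) (τseq n)) y₀ + S (tS (Mseq n) (τseq n) - τseq n) (P (useq n))) -
          (S (tS M τ) y₀ + S (tS M τ - τ) (P ustar))‖ +
        ‖S (tS (Mseq n) (τseq n) - τseq n) (S (tS M τ) y₀ + S (tS M τ - τ) (P ustar)) -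
          S (tS M τ - τ) (S (tS M τ) y₀ + S (tS M τ - τ) (P ustar))‖) atTop (nhds 0) := by
      simpa using hyconv.add h4c
    refine squeeze_zero' (Eventually.of_forall fun n => norm_nonneg _)
      (Eventually.of_forall fun n => ?_) h11
    rw [← map_sub]
    refine le_trans (hPnorm _) ?_
    have h7 : S (tS (Mseq n) (τseq n) - τseq n)
          (S (tS (Mseq n) (τseq n)) y₀ + S (tS (Mseq n) (τseq n) - τseq n) (P (useq n))) -
        S (tS M τ - τ) (S (tS M τ) y₀ + S (tS M τ - τ) (P ustar)) =
        S (tS (Mseq n) (τseq n) - τseq n)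
          ((S (tS (Mseq n) (τseq n)) y₀ + S (tS (Mseq n) (τseq n) - τseq n) (P (useq n))) -
            (S (tS M τ) y₀ + S (tS M τ - τ) (P ustar))) +
        (S (tS (Mseq n) (τseq n) - τseq n) (S (tS M τ) y₀ + S (tS M τ - τ) (P ustar)) -
          S (tS M τ - τ) (S (tS M τ) y₀ + S (tS M τ - τ) (P ustar))) := by
      rw [map_sub]
      abel
    rw [h7]
    refine le_trans (norm_add_le _ _) (add_le_add ?_ le_rfl)
    exact aux_normS_le hlam S hSdecay (han n) _
  have hQconv : Tendsto (fun n =>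
      P (S (tS (Mseq n) (τseq n) - τseq n)
          (S (tS (Mseq n) (τseq n)) y₀ + S (tS (Mseq n) (τseq n) - τseq n) (P (useq n)))))
      atTop (nhds (P (S (tS M τ - τ) (S (tS M τ) y₀ + S (tS M τ - τ) (P ustar))))) :=
    tendsto_iff_norm_sub_tendsto_zero.2 hqconv
  -- Step 5 : conclusion
  have hqsnorm : ‖P (S (tS M τ - τ) (S (tS M τ) y₀ + S (tS M τ - τ) (P ustar)))‖ ≠ 0 :=
    norm_ne_zero_iff.2 hq0
  have hfin : Tendsto useq atTop (nhds ustar) := by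
    have h6 : Tendsto (fun n =>
        -(Mseq n / ‖P (S (tS (Mseq n) (τseq n) - τseq n)
            (S (tS (Mseq n) (τseq n)) y₀ + S (tS (Mseq n) (τseq n) - τseq n) (P (useq n))))‖) •
          P (S (tS (Mseq n) (τseq n) - τseq n)
            (S (tS (Mseq n) (τseq n)) y₀ + S (tS (Mseq n) (τseq n) - τseq n) (P (useq n)))))
        atTop (nhds (-(M / ‖P (S (tS M τ - τ) (S (tS M τ) y₀ + S (tS M τ - τ) (P ustar)))‖) •
          P (S (tS M τ - τ) (S (tS M τ) y₀ + S (tS M τ - τ) (P ustar))))) := by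
      exact Tendsto.smul ((hMconv.div hQconv.norm hqsnorm).neg) hQconv
    have h6' := h6.congr (fun n => (hueqn n).symm)
    rw [← hueq] at h6'
    exact h6'
  exact tendsto_iff_norm_sub_tendsto_zero.1 hfin
end
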